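/- arXiv:1603.02430 — 6 statements merged into one kernel-verified Lean document; each statement's English description precedes it below -/
import Mathlib

section
/- Let H_{2m+1,2n} be a Harary graph with 2n ≡ 0 (mod 2m+1), say 2n = (2m+1)ℓ. Then γ_{×2,t}(H_{2m+1,2n}) = 2ℓ = ⌈4n/(2m+1)⌉, and the set S = {(2m+1)i+1, (2m+1)i+(m+1) : 0 ≤ i ≤ ℓ−1} is a minimum double total dominating set. -/
/-- `S` is a `k`-tuple total dominating set of `G`:
every vertex has at least `k` neighbors in `S`. -/
def IsKTupleTotalDomSet {V : Type*} (G : SimpleGraph V) (k : ℕ) (S : Set V) : Prop :=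
  ∀ v : V, k ≤ (G.neighborSet v ∩ S).ncard

/-- The `k`-tuple total domination number of `G`. -/
noncomputable def kTupleTotalDomNum {V : Type*} (G : SimpleGraph V) (k : ℕ) : ℕ :=
  sInf {r | ∃ S : Set V, IsKTupleTotalDomSet G k S ∧ S.ncard = r}

/-- The Harary graph `H_{2m,n}` on `ZMod n`: each vertex adjacent to the nearest
`m` vertices in each direction around the circle. -/
def HararyEven (m n : ℕ) : SimpleGraph (ZMod n) :=
  SimpleGraph.fromRel (fun i j => ∃ d : ℕ, 1 ≤ d ∧ d ≤ m ∧ j = i + (d : ZMod n))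

/-- The Harary graph `H_{2m+1,2n}` on `ZMod (2n)`: each vertex adjacent to the nearest
`m` vertices in each direction and to the diametrically opposite vertex. -/
def HararyOddEven (m n : ℕ) : SimpleGraph (ZMod (2 * n)) :=
  SimpleGraph.fromRel
    (fun i j => (∃ d : ℕ, 1 ≤ d ∧ d ≤ m ∧ j = i + (d : ZMod (2 * n))) ∨ j = i + (n : ZMod (2 * n)))

/-- The Harary graph `H_{2m+1,2n+1}` on `ZMod (2n+1)`: obtained from `H_{2m,2n+1}`
by adding the edges `i ↔ i + n` for `0 ≤ i ≤ n`. -/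
def HararyOddOdd (m n : ℕ) : SimpleGraph (ZMod (2 * n + 1)) :=
  SimpleGraph.fromRel
    (fun i j => (∃ d : ℕ, 1 ≤ d ∧ d ≤ m ∧ j = i + (d : ZMod (2 * n + 1))) ∨
      ∃ i₀ : ℕ, i₀ ≤ n ∧ i = (i₀ : ZMod (2 * n + 1)) ∧ j = ((i₀ + n : ℕ) : ZMod (2 * n + 1)))

section Help
variable {m n : ℕ} (hn : 0 < n)

lemma castinj (hn : 0 < n) {a b : ℕ} (ha : a < 2*n) (hb : b < 2*n)
    (h : (a : ZMod (2*n)) = b) : a = b := by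
  haveI : NeZero (2*n) := ⟨by omega⟩
  have := congrArg ZMod.val h
  rwa [ZMod.val_cast_of_lt ha, ZMod.val_cast_of_lt hb] at this

lemma cast_ne_zero (hn : 0 < n) {a : ℕ} (h0 : 0 < a) (ha : a < 2*n) :
    (a : ZMod (2*n)) ≠ 0 := by
  intro h
  have := castinj hn (b := 0) ha (by omega) (by exact_mod_cast h)
  omega

lemma nn_zero (hn : 0 < n) : (n : ZMod (2*n)) + n = 0 := by
  have : ((n + n : ℕ) : ZMod (2*n)) = 0 := by
    rw [show n + n = 2*n by ring, ZMod.natCast_self]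
  simpa using this

lemma adj_iff (hn : 0 < n) (v w : ZMod (2*n)) :
    (HararyOddEven m n).Adj v w ↔ v ≠ w ∧
      ((∃ d : ℕ, 1 ≤ d ∧ d ≤ m ∧ (w = v + d ∨ v = w + d)) ∨ w = v + n) := by
  rw [HararyOddEven, SimpleGraph.fromRel_adj]
  constructor
  · rintro ⟨hne, h | h⟩
    · refine ⟨hne, ?_⟩
      rcases h with ⟨d, h1, h2, h3⟩ | h
      · exact Or.inl ⟨d, h1, h2, Or.inl h3⟩
      · exact Or.inr h
    · refine ⟨hne, ?_⟩
      rcases h with ⟨d, h1, h2, h3⟩ | h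
      · exact Or.inl ⟨d, h1, h2, Or.inr h3⟩
      · refine Or.inr ?_
        rw [h]; rw [add_assoc, nn_zero hn, add_zero]
  · rintro ⟨hne, h⟩
    refine ⟨hne, ?_⟩
    rcases h with ⟨d, h1, h2, h3 | h3⟩ | h
    · exact Or.inl (Or.inl ⟨d, h1, h2, h3⟩)
    · exact Or.inr (Or.inl ⟨d, h1, h2, h3⟩)
    · exact Or.inl (Or.inr h)

-- adjacency builders
lemma adj_add (hn : 0 < n) (v : ZMod (2*n)) {d : ℕ} (h1 : 1 ≤ d) (h2 : d ≤ m)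
    (hm : 2*m < 2*n) : (HararyOddEven m n).Adj v (v + d) := by
  rw [adj_iff hn]
  refine ⟨?_, Or.inl ⟨d, h1, h2, Or.inl rfl⟩⟩
  intro h
  exact cast_ne_zero hn h1 (by omega) (by linear_combination h.symm)

lemma adj_sub (hn : 0 < n) (v : ZMod (2*n)) {d : ℕ} (h1 : 1 ≤ d) (h2 : d ≤ m)
    (hm : 2*m < 2*n) : (HararyOddEven m n).Adj v (v - d) := by
  rw [adj_iff hn]
  refine ⟨?_, Or.inl ⟨d, h1, h2, Or.inr (by ring)⟩⟩
  intro h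
  exact cast_ne_zero hn h1 (by omega) (by linear_combination h)

lemma adj_opp (hn : 0 < n) (v : ZMod (2*n)) : (HararyOddEven m n).Adj v (v + n) := by
  rw [adj_iff hn]
  refine ⟨?_, Or.inr rfl⟩
  intro h
  exact cast_ne_zero hn hn (by omega) (by linear_combination h.symm)

end Help

section Nb
variable {m n : ℕ}

def nbF (m n : ℕ) (v : ZMod (2*n)) : Finset (ZMod (2*n)) :=
  (((Finset.Icc 1 m).image fun d : ℕ => v + (d : ZMod (2*n))) ∪
   ((Finset.Icc 1 m).image fun d : ℕ => v - (d : ZMod (2*n)))) ∪ {v + (n : ZMod (2*n))}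

lemma neighborSet_eq (hn : 0 < n) (hmn : m < n) (v : ZMod (2*n)) :
    (HararyOddEven m n).neighborSet v = ↑(nbF m n v) := by
  ext w
  simp only [SimpleGraph.mem_neighborSet, nbF, Finset.coe_union, Set.mem_union,
    Finset.coe_image, Set.mem_image, Finset.mem_coe, Finset.mem_Icc,
    Finset.coe_singleton, Set.mem_singleton_iff]
  constructor
  · rw [adj_iff hn]
    rintro ⟨hne, ⟨d, h1, h2, h3 | h3⟩ | h⟩
    · exact Or.inl (Or.inl ⟨d, ⟨h1, h2⟩, h3.symm⟩)
    · exact Or.inl (Or.inr ⟨d, ⟨h1, h2⟩, by linear_combination h3⟩)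
    · exact Or.inr h
  · rintro ((⟨d, ⟨h1, h2⟩, rfl⟩ | ⟨d, ⟨h1, h2⟩, rfl⟩) | rfl)
    · exact adj_add hn v h1 h2 (by omega)
    · exact adj_sub hn v h1 h2 (by omega)
    · exact adj_opp hn v

lemma card_nbF (hn : 0 < n) (hmn : m < n) (v : ZMod (2*n)) :
    (nbF m n v).card = 2*m + 1 := by
  have c1 : ((Finset.Icc 1 m).image fun d : ℕ => v + (d : ZMod (2*n))).card = m := by
    rw [Finset.card_image_of_injOn, Nat.card_Icc]
    · omega
    · intro a ha b hb h
      simp only [Finset.coe_Icc, Set.mem_Icc] at ha hb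
      exact castinj hn (by omega) (by omega) (by linear_combination h)
  have c2 : ((Finset.Icc 1 m).image fun d : ℕ => v - (d : ZMod (2*n))).card = m := by
    rw [Finset.card_image_of_injOn, Nat.card_Icc]
    · omega
    · intro a ha b hb h
      simp only [Finset.coe_Icc, Set.mem_Icc] at ha hb
      exact castinj hn (by omega) (by omega) (by linear_combination -h)
  have d12 : Disjoint ((Finset.Icc 1 m).image fun d : ℕ => v + (d : ZMod (2*n)))
      ((Finset.Icc 1 m).image fun d : ℕ => v - (d : ZMod (2*n))) := by
    rw [Finset.disjoint_left]
    rintro x hx hy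
    simp only [Finset.mem_image, Finset.mem_Icc] at hx hy
    obtain ⟨a, ⟨ha1, ha2⟩, rfl⟩ := hx
    obtain ⟨b, ⟨hb1, hb2⟩, hb⟩ := hy
    have : ((a + b : ℕ) : ZMod (2*n)) = 0 := by push_cast; linear_combination -hb
    exact cast_ne_zero hn (by omega) (by omega) this
  have d3 : Disjoint (((Finset.Icc 1 m).image fun d : ℕ => v + (d : ZMod (2*n))) ∪
      ((Finset.Icc 1 m).image fun d : ℕ => v - (d : ZMod (2*n)))) ({v + (n : ZMod (2*n))} : Finset _) := by
    rw [Finset.disjoint_right]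
    rintro x hx hy
    simp only [Finset.mem_singleton] at hx
    subst hx
    simp only [Finset.mem_union, Finset.mem_image, Finset.mem_Icc] at hy
    rcases hy with ⟨a, ⟨ha1, ha2⟩, ha⟩ | ⟨a, ⟨ha1, ha2⟩, ha⟩
    · have : a = n := castinj hn (by omega) (by omega) (by linear_combination ha)
      omega
    · have : ((a + n : ℕ) : ZMod (2*n)) = 0 := by push_cast; linear_combination -ha
      exact cast_ne_zero hn (by omega) (by omega) this
  rw [nbF, Finset.card_union_of_disjoint d3, Finset.card_union_of_disjoint d12, c1, c2,
    Finset.card_singleton]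
  omega

lemma ncard_neighborSet (hn : 0 < n) (hmn : m < n) (v : ZMod (2*n)) :
    ((HararyOddEven m n).neighborSet v).ncard = 2*m + 1 := by
  rw [neighborSet_eq hn hmn, Set.ncard_coe_finset, card_nbF hn hmn]

end Nb

section SetS
variable {m n ℓ : ℕ}

lemma blk_lt (hdvd : 2*n = (2*m+1)*ℓ) {i : ℕ} (hi : i < ℓ) {c : ℕ} (hc : c ≤ 2*m) :
    (2*m+1)*i + c < 2*n := by
  have h : (2*m+1)*(i+1) ≤ (2*m+1)*ℓ := Nat.mul_le_mul_left _ hi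
  rw [Nat.mul_add] at h
  omega

lemma cast_blk (hdvd : 2*n = (2*m+1)*ℓ) (j c : ℕ) :
    (((2*m+1) * (j % ℓ) + c : ℕ) : ZMod (2*n)) = (((2*m+1)*j + c : ℕ) : ZMod (2*n)) := by
  have key : (2*m+1)*j + c = ((2*m+1)*(j % ℓ) + c) + (2*n)*(j/ℓ) := by
    conv_lhs => rw [← Nat.mod_add_div j ℓ]
    rw [hdvd]; ring
  rw [key]
  have h0 : ((2*n : ℕ) : ZMod (2*n)) = 0 := ZMod.natCast_self _
  push_cast at h0 ⊢
  linear_combination (-((j/ℓ : ℕ) : ZMod (2*n))) * h0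

def SF (m n ℓ : ℕ) : Finset (ZMod (2*n)) :=
  ((Finset.range ℓ).image fun i : ℕ => (((2*m+1)*i + 1 : ℕ) : ZMod (2*n))) ∪
  ((Finset.range ℓ).image fun i : ℕ => (((2*m+1)*i + (m+1) : ℕ) : ZMod (2*n)))

lemma Sset_eq (m n ℓ : ℕ) :
    {x : ZMod (2 * n) | ∃ i : ℕ, i < ℓ ∧
        (x = (((2 * m + 1) * i + 1 : ℕ) : ZMod (2 * n)) ∨
         x = (((2 * m + 1) * i + (m + 1) : ℕ) : ZMod (2 * n)))} = ↑(SF m n ℓ) := by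
  ext x
  simp only [Set.mem_setOf_eq, SF, Finset.coe_union, Set.mem_union, Finset.coe_image,
    Set.mem_image, Finset.mem_coe, Finset.mem_range]
  constructor
  · rintro ⟨i, hi, h | h⟩
    · exact Or.inl ⟨i, hi, h.symm⟩
    · exact Or.inr ⟨i, hi, h.symm⟩
  · rintro (⟨i, hi, h⟩ | ⟨i, hi, h⟩)
    · exact ⟨i, hi, Or.inl h.symm⟩
    · exact ⟨i, hi, Or.inr h.symm⟩

lemma card_SF (hm : 1 ≤ m) (hn : 0 < n) (hdvd : 2*n = (2*m+1)*ℓ) :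
    (SF m n ℓ).card = 2*ℓ := by
  have inj1 : ∀ c ≤ 2*m, Set.InjOn (fun i : ℕ => (((2*m+1)*i + c : ℕ) : ZMod (2*n)))
      ↑(Finset.range ℓ) := by
    intro c hc a ha b hb h
    simp only [Finset.coe_range, Set.mem_Iio] at ha hb
    have := castinj hn (blk_lt hdvd ha hc) (blk_lt hdvd hb hc) h
    have h2 : (2*m+1)*a = (2*m+1)*b := by omega
    exact Nat.eq_of_mul_eq_mul_left (by omega) h2
  have c1 : ((Finset.range ℓ).image fun i : ℕ => (((2*m+1)*i + 1 : ℕ) : ZMod (2*n))).card = ℓ := by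
    rw [Finset.card_image_of_injOn (inj1 1 (by omega)), Finset.card_range]
  have c2 : ((Finset.range ℓ).image fun i : ℕ => (((2*m+1)*i + (m+1) : ℕ) : ZMod (2*n))).card = ℓ := by
    rw [Finset.card_image_of_injOn (inj1 (m+1) (by omega)), Finset.card_range]
  have disj : Disjoint ((Finset.range ℓ).image fun i : ℕ => (((2*m+1)*i + 1 : ℕ) : ZMod (2*n)))
      ((Finset.range ℓ).image fun i : ℕ => (((2*m+1)*i + (m+1) : ℕ) : ZMod (2*n))) := by
    rw [Finset.disjoint_left]
    rintro x hx hy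
    simp only [Finset.mem_image, Finset.mem_range] at hx hy
    obtain ⟨a, ha, rfl⟩ := hx
    obtain ⟨b, hb, h⟩ := hy
    have heq := castinj hn (blk_lt hdvd hb (by omega)) (blk_lt hdvd ha (by omega)) h
    have h2 := congrArg (· % (2*m+1)) heq
    simp only [Nat.mul_add_mod] at h2
    rw [Nat.mod_eq_of_lt (by omega), Nat.mod_eq_of_lt (by omega)] at h2
    omega
  rw [SF, Finset.card_union_of_disjoint disj, c1, c2]
  omega

end SetS

section Dom
variable {m n ℓ : ℕ}

lemma two_le_pair {α : Type*} {s : Set α} (hfin : s.Finite) {a b : α}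
    (ha : a ∈ s) (hb : b ∈ s) (hab : a ≠ b) : 2 ≤ s.ncard := by
  calc 2 = ({a, b} : Set α).ncard := (Set.ncard_pair hab).symm
    _ ≤ s.ncard := Set.ncard_le_ncard (by simp [Set.insert_subset_iff, ha, hb]) hfin

lemma shift_ne (hn : 0 < n) {a b : ℕ} (hab : a ≠ b) (ha : a < 2*n) (hb : b < 2*n)
    (v : ZMod (2*n)) : v + (a : ZMod (2*n)) ≠ v + (b : ZMod (2*n)) :=
  fun h => hab (castinj hn ha hb (by linear_combination h))

lemma v_sub_eq (hn : 0 < n) {d : ℕ} (hd : d ≤ 2*n) (v : ZMod (2*n)) :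
    v + ((2*n - d : ℕ) : ZMod (2*n)) = v - (d : ZMod (2*n)) := by
  rw [Nat.cast_sub hd, ZMod.natCast_self]
  ring

lemma mem_helper (hdvd : 2*n = (2*m+1)*ℓ) (hℓ : 1 ≤ ℓ) {t c : ℕ} (hc : c = 1 ∨ c = m+1)
    (x : ZMod (2*n)) (hx : x = (((2*m+1)*t + c : ℕ) : ZMod (2*n))) :
    x ∈ {x : ZMod (2 * n) | ∃ i : ℕ, i < ℓ ∧
        (x = (((2 * m + 1) * i + 1 : ℕ) : ZMod (2 * n)) ∨
         x = (((2 * m + 1) * i + (m + 1) : ℕ) : ZMod (2 * n)))} := by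
  refine ⟨t % ℓ, Nat.mod_lt _ (by omega), ?_⟩
  rw [hx, ← cast_blk hdvd]
  rcases hc with rfl | rfl
  · exact Or.inl rfl
  · exact Or.inr rfl

lemma dom_main (hm : 1 ≤ m) {k : ℕ} (hk1 : 1 ≤ k) (hnk : n = (2*m+1)*k) (hℓk : ℓ = 2*k) :
    IsKTupleTotalDomSet (HararyOddEven m n) 2
      {x : ZMod (2 * n) | ∃ i : ℕ, i < ℓ ∧
        (x = (((2 * m + 1) * i + 1 : ℕ) : ZMod (2 * n)) ∨
         x = (((2 * m + 1) * i + (m + 1) : ℕ) : ZMod (2 * n)))} := by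
  have hdvd : 2*n = (2*m+1)*ℓ := by rw [hnk, hℓk]; ring
  have hCk : (2*m+1)*1 ≤ (2*m+1)*k := Nat.mul_le_mul_left _ hk1
  have hn0 : 0 < n := by omega
  have hmn : m < n := by omega
  have hℓ1 : 1 ≤ ℓ := by omega
  haveI : NeZero (2*n) := ⟨by omega⟩
  intro v
  have hfinN : ((HararyOddEven m n).neighborSet v).Finite := by
    rw [neighborSet_eq hn0 hmn]; exact (nbF m n v).finite_toSet
  obtain ⟨q, r, hr, hxqr, hq⟩ : ∃ q r, r < 2*m+1 ∧ v.val = (2*m+1)*q + r ∧ q < ℓ := by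
    have hxlt : v.val < 2*n := ZMod.val_lt v
    refine ⟨v.val / (2*m+1), v.val % (2*m+1), Nat.mod_lt _ (by omega),
      (Nat.div_add_mod _ _).symm, ?_⟩
    by_contra hcon
    have h6 : (2*m+1)*ℓ ≤ (2*m+1)*(v.val / (2*m+1)) := Nat.mul_le_mul_left _ (by omega)
    have h7 := Nat.div_add_mod v.val (2*m+1)
    omega
  have hxlt : v.val < 2*n := ZMod.val_lt v
  have hvB : v = (((2*m+1)*q + r : ℕ) : ZMod (2*n)) := by
    rw [← hxqr, ZMod.natCast_val, ZMod.cast_id]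
  -- expansion facts for omega
  have e1 : (2*m+1)*(q+ℓ) = (2*m+1)*q + (2*m+1)*ℓ := by ring
  have e2 : (2*m+1)*(q+1) = (2*m+1)*q + (2*m+1) := by ring
  have e3 : (2*m+1)*(q+k) = (2*m+1)*q + (2*m+1)*k := by ring
  have e4 : (2*m+1)*(q+ℓ-1) + (2*m+1) = (2*m+1)*q + (2*m+1)*ℓ := by
    have h5 : q+ℓ-1+1 = q+ℓ := by omega
    calc (2*m+1)*(q+ℓ-1) + (2*m+1) = (2*m+1)*((q+ℓ-1)+1) := by ring
      _ = (2*m+1)*q + (2*m+1)*ℓ := by rw [h5]; ring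
  have hvadd : ∀ e : ℕ, v + (e : ZMod (2*n)) = (((2*m+1)*q + r + e : ℕ) : ZMod (2*n)) := by
    intro e
    rw [hvB, ← Nat.cast_add]
  have hcase : r = 0 ∨ r = 1 ∨ (2 ≤ r ∧ r ≤ m) ∨ r = m+1 ∨ (m+2 ≤ r ∧ r ≤ 2*m) := by omega
  rcases hcase with h0 | h1 | ⟨h2a, h2b⟩ | h3 | ⟨h4a, h4b⟩
  · -- r = 0 : witnesses v+1 and v+(2n-m)
    refine two_le_pair (hfinN.inter_of_left _) (a := v + ((1:ℕ) : ZMod (2*n))) (b := v + ((2*n-m : ℕ) : ZMod (2*n)))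
      ⟨(SimpleGraph.mem_neighborSet _ _ _).mpr (adj_add hn0 v le_rfl hm (by omega)),
        mem_helper hdvd hℓ1 (t := q) (Or.inl rfl) _ (by rw [hvadd]; congr 1; omega)⟩
      ⟨(SimpleGraph.mem_neighborSet _ _ _).mpr
        (by rw [v_sub_eq hn0 (by omega) v]; exact adj_sub hn0 v hm le_rfl (by omega)),
        mem_helper hdvd hℓ1 (t := q+ℓ-1) (Or.inr rfl) _ (by rw [hvadd]; congr 1; omega)⟩
      (shift_ne hn0 (by omega) (by omega) (by omega) v)
  · -- r = 1 : witnesses v+m and v+n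
    refine two_le_pair (hfinN.inter_of_left _) (a := v + ((m:ℕ) : ZMod (2*n))) (b := v + ((n:ℕ) : ZMod (2*n)))
      ⟨(SimpleGraph.mem_neighborSet _ _ _).mpr (adj_add hn0 v hm le_rfl (by omega)),
        mem_helper hdvd hℓ1 (t := q) (Or.inr rfl) _ (by rw [hvadd]; congr 1; omega)⟩
      ⟨(SimpleGraph.mem_neighborSet _ _ _).mpr (adj_opp hn0 v),
        mem_helper hdvd hℓ1 (t := q+k) (Or.inl rfl) _ (by rw [hvadd]; congr 1; omega)⟩
      (shift_ne hn0 (by omega) (by omega) (by omega) v)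
  · -- 2 ≤ r ≤ m : witnesses v+(2n-(r-1)) and v+(m+1-r)
    refine two_le_pair (hfinN.inter_of_left _) (a := v + ((2*n-(r-1) : ℕ) : ZMod (2*n)))
      (b := v + ((m+1-r : ℕ) : ZMod (2*n)))
      ⟨(SimpleGraph.mem_neighborSet _ _ _).mpr
        (by rw [v_sub_eq hn0 (by omega) v]; exact adj_sub hn0 v (by omega) (by omega) (by omega)),
        mem_helper hdvd hℓ1 (t := q+ℓ) (Or.inl rfl) _ (by rw [hvadd]; congr 1; omega)⟩
      ⟨(SimpleGraph.mem_neighborSet _ _ _).mpr (adj_add hn0 v (by omega) (by omega) (by omega)),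
        mem_helper hdvd hℓ1 (t := q) (Or.inr rfl) _ (by rw [hvadd]; congr 1; omega)⟩
      (shift_ne hn0 (by omega) (by omega) (by omega) v)
  · -- r = m+1 : witnesses v+(2n-m) and v+n
    refine two_le_pair (hfinN.inter_of_left _) (a := v + ((2*n-m : ℕ) : ZMod (2*n))) (b := v + ((n:ℕ) : ZMod (2*n)))
      ⟨(SimpleGraph.mem_neighborSet _ _ _).mpr
        (by rw [v_sub_eq hn0 (by omega) v]; exact adj_sub hn0 v hm le_rfl (by omega)),
        mem_helper hdvd hℓ1 (t := q+ℓ) (Or.inl rfl) _ (by rw [hvadd]; congr 1; omega)⟩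
      ⟨(SimpleGraph.mem_neighborSet _ _ _).mpr (adj_opp hn0 v),
        mem_helper hdvd hℓ1 (t := q+k) (Or.inr rfl) _ (by rw [hvadd]; congr 1; omega)⟩
      (shift_ne hn0 (by omega) (by omega) (by omega) v)
  · -- m+2 ≤ r ≤ 2m : witnesses v+(2n-(r-m-1)) and v+(2m+2-r)
    refine two_le_pair (hfinN.inter_of_left _) (a := v + ((2*n-(r-m-1) : ℕ) : ZMod (2*n)))
      (b := v + ((2*m+2-r : ℕ) : ZMod (2*n)))
      ⟨(SimpleGraph.mem_neighborSet _ _ _).mpr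
        (by rw [v_sub_eq hn0 (by omega) v]; exact adj_sub hn0 v (by omega) (by omega) (by omega)),
        mem_helper hdvd hℓ1 (t := q+ℓ) (Or.inr rfl) _ (by rw [hvadd]; congr 1; omega)⟩
      ⟨(SimpleGraph.mem_neighborSet _ _ _).mpr (adj_add hn0 v (by omega) (by omega) (by omega)),
        mem_helper hdvd hℓ1 (t := q+1) (Or.inl rfl) _ (by rw [hvadd]; congr 1; omega)⟩
      (shift_ne hn0 (by omega) (by omega) (by omega) v)

end Dom

section Lower
variable {m n ℓ : ℕ}

lemma lower_bound (hm : 1 ≤ m) {k : ℕ} (hk1 : 1 ≤ k) (hnk : n = (2*m+1)*k) (hℓk : ℓ = 2*k)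
    (S : Set (ZMod (2*n))) (hS : IsKTupleTotalDomSet (HararyOddEven m n) 2 S) :
    2*ℓ ≤ S.ncard := by
  classical
  have hdvd : 2*n = (2*m+1)*ℓ := by rw [hnk, hℓk]; ring
  have hCk : (2*m+1)*1 ≤ (2*m+1)*k := Nat.mul_le_mul_left _ hk1
  have hn0 : 0 < n := by omega
  have hmn : m < n := by omega
  haveI : NeZero (2*n) := ⟨by omega⟩
  have hfin : S.Finite := Set.toFinite S
  set T := hfin.toFinset with hT
  have hmemiff : ∀ v w : ZMod (2*n), w ∈ nbF m n v ↔ (HararyOddEven m n).Adj v w := by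
    intro v w
    rw [← SimpleGraph.mem_neighborSet, neighborSet_eq hn0 hmn, Finset.mem_coe]
  have hkey : ∀ v : ZMod (2*n), 2 ≤ (nbF m n v ∩ T).card := by
    intro v
    have h1 := hS v
    have h2 : (HararyOddEven m n).neighborSet v ∩ S = ↑(nbF m n v ∩ T) := by
      rw [neighborSet_eq hn0 hmn, Finset.coe_inter, hT, Set.Finite.coe_toFinset]
    rwa [h2, Set.ncard_coe_finset] at h1
  have hsum1 : 2 * (2*n) ≤ ∑ v : ZMod (2*n), (nbF m n v ∩ T).card := by
    calc 2 * (2*n) = ∑ _v : ZMod (2*n), 2 := by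
          rw [Finset.sum_const, Finset.card_univ, ZMod.card, smul_eq_mul, mul_comm]
      _ ≤ _ := Finset.sum_le_sum fun v _ => hkey v
  have hsum2 : ∑ v : ZMod (2*n), (nbF m n v ∩ T).card = T.card * (2*m+1) := by
    have step1 : ∀ v : ZMod (2*n), (nbF m n v ∩ T).card =
        ∑ s ∈ T, if s ∈ nbF m n v then 1 else 0 := by
      intro v
      rw [← Finset.card_filter]
      congr 1
      ext s
      simp [Finset.mem_filter, Finset.mem_inter, and_comm]
    calc ∑ v : ZMod (2*n), (nbF m n v ∩ T).card
        = ∑ v : ZMod (2*n), ∑ s ∈ T, if s ∈ nbF m n v then 1 else 0 := by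
          exact Finset.sum_congr rfl fun v _ => step1 v
      _ = ∑ s ∈ T, ∑ v : ZMod (2*n), if s ∈ nbF m n v then 1 else 0 := Finset.sum_comm
      _ = ∑ s ∈ T, (2*m+1) := by
          refine Finset.sum_congr rfl fun s _ => ?_
          rw [← Finset.card_filter]
          have : Finset.univ.filter (fun v => s ∈ nbF m n v) = nbF m n s := by
            ext v
            simp only [Finset.mem_filter, Finset.mem_univ, true_and, hmemiff,
              SimpleGraph.adj_comm]
          rw [this, card_nbF hn0 hmn]
      _ = T.card * (2*m+1) := by rw [Finset.sum_const, smul_eq_mul]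
  have hcard : S.ncard = T.card := by
    rw [hT, Set.ncard_eq_toFinset_card _ hfin]
  rw [hcard]
  have hfinal : 2 * ((2*m+1)*ℓ) ≤ T.card * (2*m+1) := by
    rw [← hdvd]; omega
  have h9 : (2*m+1) * (2*ℓ) ≤ (2*m+1) * T.card := by
    calc (2*m+1) * (2*ℓ) = 2 * ((2*m+1)*ℓ) := by ring
      _ ≤ T.card * (2*m+1) := hfinal
      _ = (2*m+1) * T.card := by ring
  exact Nat.le_of_mul_le_mul_left h9 (by omega)

end Lower

theorem stmt_9 (m n ℓ : ℕ) (hm : 1 ≤ m) (hℓ : 1 ≤ ℓ) (hdvd : 2 * n = (2 * m + 1) * ℓ) :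
    kTupleTotalDomNum (HararyOddEven m n) 2 = 2 * ℓ ∧
    2 * ℓ = ⌈(4 * n : ℚ) / (2 * m + 1 : ℚ)⌉₊ ∧
    IsKTupleTotalDomSet (HararyOddEven m n) 2
      {x : ZMod (2 * n) | ∃ i : ℕ, i < ℓ ∧
        (x = (((2 * m + 1) * i + 1 : ℕ) : ZMod (2 * n)) ∨
         x = (((2 * m + 1) * i + (m + 1) : ℕ) : ZMod (2 * n)))} ∧
    Set.ncard {x : ZMod (2 * n) | ∃ i : ℕ, i < ℓ ∧
        (x = (((2 * m + 1) * i + 1 : ℕ) : ZMod (2 * n)) ∨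
         x = (((2 * m + 1) * i + (m + 1) : ℕ) : ZMod (2 * n)))} = 2 * ℓ := by
  have hodd : Odd (2*m+1) := ⟨m, by ring⟩
  have h2 : (2:ℕ) ∣ ℓ := (Nat.coprime_two_left.mpr hodd).dvd_of_dvd_mul_left ⟨n, hdvd.symm⟩
  obtain ⟨k, hℓk⟩ := h2
  have hk1 : 1 ≤ k := by omega
  have hnk : n = (2*m+1)*k := by
    have h3 : 2*n = 2*((2*m+1)*k) := by rw [hdvd, hℓk]; ring
    omega
  have hCk : (2*m+1)*1 ≤ (2*m+1)*k := Nat.mul_le_mul_left _ hk1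
  have hn0 : 0 < n := by omega
  have part3 := dom_main hm hk1 hnk hℓk
  have part4 : Set.ncard {x : ZMod (2 * n) | ∃ i : ℕ, i < ℓ ∧
        (x = (((2 * m + 1) * i + 1 : ℕ) : ZMod (2 * n)) ∨
         x = (((2 * m + 1) * i + (m + 1) : ℕ) : ZMod (2 * n)))} = 2 * ℓ := by
    rw [Sset_eq, Set.ncard_coe_finset, card_SF hm hn0 hdvd]
  refine ⟨?_, ?_, part3, part4⟩
  · apply le_antisymm
    · exact Nat.sInf_le ⟨_, part3, part4⟩
    · refine le_csInf ⟨2*ℓ, ⟨_, part3, part4⟩⟩ ?_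
      rintro b ⟨S, hS, rfl⟩
      exact lower_bound hm hk1 hnk hℓk S hS
  · have hq : (4 * n : ℚ) / (2 * m + 1 : ℚ) = ((2*ℓ : ℕ) : ℚ) := by
      rw [div_eq_iff (by positivity)]
      have h4 : ((2*n : ℕ) : ℚ) = (((2*m+1)*ℓ : ℕ) : ℚ) := by exact congrArg (fun t : ℕ => (t : ℚ)) hdvd
      push_cast at h4 ⊢
      linear_combination 2 * h4
    rw [hq, Nat.ceil_natCast]
end

section
/- For every Harary graph H_{2m+1,2n} (with 2n ≥ 2m+2), γ_{×2,t}(H_{2m+1,2n}) ≤ ⌈4n/(2m+1)⌉ + 1. -/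
namespace Stmt10Aux
def dd (n t j : ℕ) : ℕ := j * n / t
lemma dd_zero (n t : ℕ) : dd n t 0 = 0 := by simp [dd]
lemma dd_mono (n t : ℕ) {i j : ℕ} (h : i ≤ j) : dd n t i ≤ dd n t j :=
  Nat.div_le_div_right (Nat.mul_le_mul_right n h)
lemma dd_add_t (n t : ℕ) (ht : 0 < t) (j : ℕ) : dd n t (j + t) = dd n t j + n := by
  unfold dd
  rw [Nat.add_mul, Nat.add_mul_div_left _ _ ht]
lemma dd_add_2t (n t : ℕ) (ht : 0 < t) (j : ℕ) : dd n t (j + 2 * t) = dd n t j + 2 * n := by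
  have h : j + 2 * t = (j + t) + t := by ring
  rw [h, dd_add_t n t ht, dd_add_t n t ht]; ring
lemma dd_2t (n t : ℕ) (ht : 0 < t) : dd n t (2 * t) = 2 * n := by
  have := dd_add_2t n t ht 0
  simpa [dd_zero] using this
lemma dd_lt (n t : ℕ) (ht : 0 < t) (htn : t ≤ n) (j : ℕ) :
    dd n t j + 1 ≤ dd n t (j + 1) := by
  unfold dd
  have h1 : (j * n + t) / t = j * n / t + 1 := Nat.add_div_right _ ht
  have h2 : (j * n + t) / t ≤ (j * n + n) / t := Nat.div_le_div_right (by omega)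
  have h3 : (j + 1) * n = j * n + n := by ring
  rw [h3]; rw [h1] at h2; exact h2
lemma dd_gap (n t c g : ℕ) (ht : 0 < t) (h : c * n ≤ t * g) (j : ℕ) :
    dd n t (j + c) ≤ dd n t j + g := by
  unfold dd
  have h3 : (j + c) * n = j * n + c * n := by ring
  rw [h3]
  calc (j * n + c * n) / t ≤ (j * n + t * g) / t := Nat.div_le_div_right (by omega)
    _ = j * n / t + g := Nat.add_mul_div_left _ _ ht
lemma exists_idx (f : ℕ → ℕ) (V : ℕ) (J : ℕ) (h0 : f 0 ≤ V) (hJ : V < f J) :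
    ∃ j, j < J ∧ f j ≤ V ∧ V < f (j + 1) := by
  induction J with
  | zero => exact absurd hJ (by omega)
  | succ J ih =>
    by_cases h : f J ≤ V
    · exact ⟨J, Nat.lt_succ_self _, h, hJ⟩
    · obtain ⟨j, hj, h1, h2⟩ := ih (by omega)
      exact ⟨j, by omega, h1, h2⟩
end Stmt10Aux


open Stmt10Aux in
theorem stmt_10 (m n : ℕ) (hm : 1 ≤ m) (hn : 2 * m + 2 ≤ 2 * n) :
    kTupleTotalDomNum (HararyOddEven m n) 2 ≤ ⌈(4 * n : ℚ) / (2 * m + 1 : ℚ)⌉₊ + 1 := by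
  classical
  have hn2 : 2 ≤ n := by omega
  have hmn : m + 1 ≤ n := by omega
  haveI : NeZero (2 * n) := ⟨by omega⟩
  obtain ⟨t, htdef⟩ : ∃ t, t = (2 * n + 2 * m) / (2 * m + 1) := ⟨_, rfl⟩
  have ht0 : 0 < t := by
    rw [htdef]
    exact (Nat.le_div_iff_mul_le (by omega)).mpr (by omega)
  have hdm := Nat.div_add_mod (2 * n + 2 * m) (2 * m + 1)
  have hmodlt : (2 * n + 2 * m) % (2 * m + 1) < 2 * m + 1 := Nat.mod_lt _ (by omega)
  rw [← htdef] at hdm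
  have htk : 2 * n ≤ t * (2 * m + 1) := by nlinarith [hdm, hmodlt]
  have htn : t ≤ n := by
    rw [htdef, Nat.div_le_iff_le_mul_add_pred (by omega)]
    nlinarith
  have htm : n ≤ t * (m + 1) := by nlinarith [htk]
  -- the dominating set
  set Sf : Finset (ZMod (2 * n)) :=
    (Finset.range (2 * t)).image (fun j => ((dd n t j : ℕ) : ZMod (2 * n))) with hSf
  have mem_S : ∀ i : ℕ, ((dd n t i : ℕ) : ZMod (2 * n)) ∈ Sf := by
    intro i
    induction i using Nat.strong_induction_on with
    | _ i ih =>
      rcases lt_or_ge i (2 * t) with h | h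
      · exact Finset.mem_image.mpr ⟨i, Finset.mem_range.mpr h, rfl⟩
      · have hi : i = (i - 2 * t) + 2 * t := by omega
        have he := dd_add_2t n t ht0 (i - 2 * t)
        rw [← hi] at he
        rw [he, Nat.cast_add, ZMod.natCast_self, add_zero]
        exact ih (i - 2 * t) (by omega)
  -- adjacency helpers
  have hne_add : ∀ (u : ZMod (2 * n)) (c : ℕ), 1 ≤ c → c < 2 * n →
      u ≠ u + (c : ZMod (2 * n)) := by
    intro u c h1 h2 h
    have hc : (c : ZMod (2 * n)) = 0 := (left_eq_add.mp h)
    rw [ZMod.natCast_eq_zero_iff] at hc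
    have := Nat.le_of_dvd (by omega) hc
    omega
  have hadj1 : ∀ (u : ZMod (2 * n)) (c : ℕ), 1 ≤ c → c ≤ m →
      (HararyOddEven m n).Adj u (u + (c : ZMod (2 * n))) := by
    intro u c h1 h2
    rw [HararyOddEven, SimpleGraph.fromRel_adj]
    exact ⟨hne_add u c h1 (by omega), Or.inl (Or.inl ⟨c, h1, h2, rfl⟩)⟩
  have hadj2 : ∀ u : ZMod (2 * n),
      (HararyOddEven m n).Adj u (u + (n : ZMod (2 * n))) := by
    intro u
    rw [HararyOddEven, SimpleGraph.fromRel_adj]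
    exact ⟨hne_add u n (by omega) (by omega), Or.inl (Or.inr rfl)⟩
  -- domination
  have hdom : IsKTupleTotalDomSet (HararyOddEven m n) 2 (↑Sf) := by
    intro v
    have key : ∀ u1 u2 : ZMod (2 * n), u1 ≠ u2 →
        (HararyOddEven m n).Adj v u1 → (HararyOddEven m n).Adj v u2 →
        u1 ∈ Sf → u2 ∈ Sf →
        2 ≤ ((HararyOddEven m n).neighborSet v ∩ ↑Sf).ncard := by
      intro u1 u2 hne a1 a2 m1 m2
      have hsub : ({u1, u2} : Set (ZMod (2 * n))) ⊆
          (HararyOddEven m n).neighborSet v ∩ ↑Sf := by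
        intro x hx
        rcases hx with rfl | hx
        · exact ⟨a1, Finset.mem_coe.mpr m1⟩
        · rw [Set.mem_singleton_iff] at hx
          subst hx
          exact ⟨a2, Finset.mem_coe.mpr m2⟩
      calc 2 = ({u1, u2} : Set (ZMod (2 * n))).ncard := (Set.ncard_pair hne).symm
        _ ≤ _ := Set.ncard_le_ncard hsub
              (Set.Finite.subset (Sf.finite_toSet) Set.inter_subset_right)
    set V := ZMod.val v with hVdef
    have hV : V < 2 * n := ZMod.val_lt v
    have hvV : ((V : ℕ) : ZMod (2 * n)) = v := ZMod.natCast_rightInverse v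
    obtain ⟨j, hj, hjle, hjlt⟩ := exists_idx (dd n t) V (2 * t)
      (by rw [dd_zero]; omega) (by rw [dd_2t n t ht0]; omega)
    have hg1 : dd n t (j + 1) ≤ dd n t j + (m + 1) :=
      dd_gap n t 1 (m + 1) ht0 (by nlinarith) j
    rcases eq_or_lt_of_le hjle with heq | hlt
    · -- v = dd j is an element of the set
      have hv0 : ((dd n t j : ℕ) : ZMod (2 * n)) = v := by rw [heq]; exact hvV
      -- u1 = v + n
      have hu1mem : v + (n : ZMod (2 * n)) ∈ Sf := by
        have he : dd n t (j + t) = dd n t j + n := dd_add_t n t ht0 j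
        have : ((dd n t (j + t) : ℕ) : ZMod (2 * n)) = v + (n : ZMod (2 * n)) := by
          rw [he, Nat.cast_add, hv0]
        rw [← this]; exact mem_S (j + t)
      have a1 : (HararyOddEven m n).Adj v (v + (n : ZMod (2 * n))) := hadj2 v
      have hglt : dd n t j + 1 ≤ dd n t (j + 1) := dd_lt n t ht0 htn j
      by_cases hR : dd n t (j + 1) - dd n t j ≤ m
      · -- right neighbor close
        set gR := dd n t (j + 1) - dd n t j with hgR
        have e2 : dd n t j + gR = dd n t (j + 1) := by omega
        have hv2 : v + (gR : ZMod (2 * n)) = ((dd n t (j + 1) : ℕ) : ZMod (2 * n)) := by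
          rw [← e2, Nat.cast_add, hv0]
        have a2 : (HararyOddEven m n).Adj v (v + (gR : ZMod (2 * n))) :=
          hadj1 v gR (by omega) hR
        have hu2mem : v + (gR : ZMod (2 * n)) ∈ Sf := by rw [hv2]; exact mem_S (j + 1)
        have hne12 : v + (n : ZMod (2 * n)) ≠ v + (gR : ZMod (2 * n)) := by
          have heq2 : v + (n : ZMod (2 * n)) =
              (v + (gR : ZMod (2 * n))) + ((n - gR : ℕ) : ZMod (2 * n)) := by
            rw [add_assoc, ← Nat.cast_add]
            congr 2
            omega
          rw [heq2]
          exact (hne_add _ (n - gR) (by omega) (by omega)).symm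
        exact key _ _ hne12 a1 a2 hu1mem hu2mem
      · -- left neighbor close
        push_neg at hR
        have hg2 : dd n t ((j + 2 * t - 1) + 2) ≤ dd n t (j + 2 * t - 1) + (2 * m + 1) :=
          dd_gap n t 2 (2 * m + 1) ht0 (by nlinarith) _
        have hp1 : (j + 2 * t - 1) + 1 = j + 2 * t := by omega
        have hp2 : (j + 2 * t - 1) + 2 = (j + 1) + 2 * t := by omega
        have hep1 : dd n t (j + 2 * t) = dd n t j + 2 * n := dd_add_2t n t ht0 j
        have hep2 : dd n t ((j + 1) + 2 * t) = dd n t (j + 1) + 2 * n := dd_add_2t n t ht0 _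
        have hpl : dd n t (j + 2 * t - 1) + 1 ≤ dd n t ((j + 2 * t - 1) + 1) :=
          dd_lt n t ht0 htn _
        rw [hp2, hep2] at hg2
        rw [hp1, hep1] at hpl
        obtain ⟨P, hP⟩ : ∃ P, P = dd n t (j + 2 * t - 1) := ⟨_, rfl⟩
        rw [← hP] at hg2 hpl
        obtain ⟨gL, hgLd⟩ : ∃ g, g = dd n t j + 2 * n - P := ⟨_, rfl⟩
        have hgL1 : 1 ≤ gL := by omega
        have hgLm : gL ≤ m := by omega
        have e3 : P + gL = dd n t j + 2 * n := by omega
        have hv2 : ((P : ℕ) : ZMod (2 * n)) + ((gL : ℕ) : ZMod (2 * n)) = v := by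
          have hc := congrArg (fun x : ℕ => (x : ZMod (2 * n))) e3
          simp only [Nat.cast_add] at hc
          rw [ZMod.natCast_self, add_zero, hv0] at hc
          exact hc
        have a2 : (HararyOddEven m n).Adj v ((P : ℕ) : ZMod (2 * n)) := by
          have := hadj1 ((P : ℕ) : ZMod (2 * n)) gL hgL1 hgLm
          rw [hv2] at this
          exact this.symm
        have hne12 : v + (n : ZMod (2 * n)) ≠ ((P : ℕ) : ZMod (2 * n)) := by
          have heq2 : v + (n : ZMod (2 * n)) =
              ((P : ℕ) : ZMod (2 * n)) + ((gL + n : ℕ) : ZMod (2 * n)) := by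
            rw [Nat.cast_add, ← add_assoc, hv2]
          rw [heq2]
          exact Ne.symm (hne_add _ (gL + n) (by omega) (by omega))
        have hu2mem : ((P : ℕ) : ZMod (2 * n)) ∈ Sf := by rw [hP]; exact mem_S _
        exact key _ _ hne12 a1 a2 hu1mem hu2mem
    · -- v strictly between dd j and dd (j+1)
      set c1 := V - dd n t j with hc1
      set c2 := dd n t (j + 1) - V with hc2
      have hc11 : 1 ≤ c1 := by omega
      have hc1m : c1 ≤ m := by omega
      have hc21 : 1 ≤ c2 := by omega
      have hc2m : c2 ≤ m := by omega
      have e1 : dd n t j + c1 = V := by omega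
      have hv1 : ((dd n t j : ℕ) : ZMod (2 * n)) + (c1 : ZMod (2 * n)) = v := by
        rw [← hvV, ← e1, Nat.cast_add]
      have a1 : (HararyOddEven m n).Adj v ((dd n t j : ℕ) : ZMod (2 * n)) := by
        have := hadj1 ((dd n t j : ℕ) : ZMod (2 * n)) c1 hc11 hc1m
        rw [hv1] at this
        exact this.symm
      have e2 : V + c2 = dd n t (j + 1) := by omega
      have hv2 : v + (c2 : ZMod (2 * n)) = ((dd n t (j + 1) : ℕ) : ZMod (2 * n)) := by
        rw [← hvV, ← Nat.cast_add, e2]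
      have a2 : (HararyOddEven m n).Adj v ((dd n t (j + 1) : ℕ) : ZMod (2 * n)) := by
        have := hadj1 v c2 hc21 hc2m
        rw [hv2] at this
        exact this
      have hne12 : ((dd n t j : ℕ) : ZMod (2 * n)) ≠ ((dd n t (j + 1) : ℕ) : ZMod (2 * n)) := by
        have e3 : dd n t j + (c1 + c2) = dd n t (j + 1) := by omega
        have : ((dd n t (j + 1) : ℕ) : ZMod (2 * n)) =
            ((dd n t j : ℕ) : ZMod (2 * n)) + ((c1 + c2 : ℕ) : ZMod (2 * n)) := by
          rw [← e3, Nat.cast_add]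
        rw [this]
        exact hne_add _ (c1 + c2) (by omega) (by omega)
      exact key _ _ hne12 a1 a2 (mem_S j) (mem_S (j + 1))
  -- cardinality
  have hcard : (↑Sf : Set (ZMod (2 * n))).ncard ≤ 2 * t := by
    rw [Set.ncard_coe_finset]
    calc Sf.card ≤ (Finset.range (2 * t)).card := Finset.card_image_le
      _ = 2 * t := Finset.card_range _
  have hmem : (↑Sf : Set (ZMod (2 * n))).ncard ∈
      {r | ∃ S : Set (ZMod (2 * n)), IsKTupleTotalDomSet (HararyOddEven m n) 2 S ∧ S.ncard = r} :=
    ⟨↑Sf, hdom, rfl⟩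
  have hb : 2 * t ≤ ⌈(4 * n : ℚ) / (2 * m + 1 : ℚ)⌉₊ + 1 := by
    obtain ⟨u, hu⟩ : ∃ u, t = u + 1 := ⟨t - 1, by omega⟩
    have hdml : t * (2 * m + 1) ≤ 2 * n + 2 * m := by
      rw [htdef]; exact Nat.div_mul_le_self _ _
    have h2 : 2 * u * (2 * m + 1) < 4 * n := by nlinarith
    have h3 : (2 * u : ℕ) < ⌈(4 * n : ℚ) / (2 * m + 1 : ℚ)⌉₊ := by
      rw [Nat.lt_ceil, lt_div_iff₀ (by positivity)]
      exact_mod_cast h2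
    omega
  calc kTupleTotalDomNum (HararyOddEven m n) 2 ≤ (↑Sf : Set (ZMod (2 * n))).ncard :=
        Nat.sInf_le hmem
    _ ≤ 2 * t := hcard
    _ ≤ _ := hb
end

section
/- Write 2n = (2m+1)ℓ + r with 0 ≤ r ≤ 2m and ℓ ≥ 1, and ℓ + r = 2mℓ′ + r′ with 0 ≤ r′ < 2m. If 1 ≤ r ≤ m, ℓ′ = 0 and 1 ≤ r′ < m, then γ_{×2,t}(H_{2m+1,2n}) = ⌈4n/(2m+1)⌉ = 2ℓ+1, witnessed by the double total dominating set S = {2mi+1, 2mi+(m+1) : 0 ≤ i ≤ ℓ−1} ∪ {2n−m+1}. -/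
section HararyAux
lemma harary_adj {m n : ℕ} (hn : 0 < n) (a c d : ℕ) (hd1 : 1 ≤ d) (hdm : d ≤ m) (hmn : m < 2*n)
    (h : a + d = c ∨ c + d = a ∨ a + d = c + 2*n ∨ c + d = a + 2*n) :
    (HararyOddEven m n).Adj (a : ZMod (2*n)) (c : ZMod (2*n)) := by
  have hcast : (c : ZMod (2*n)) = (a : ZMod (2*n)) + (d : ZMod (2*n)) ∨
      (a : ZMod (2*n)) = (c : ZMod (2*n)) + (d : ZMod (2*n)) := by
    rcases h with h|h|h|h
    · left; rw [← h]; push_cast; ring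
    · right; rw [← h]; push_cast; ring
    · left
      have hc := congrArg (fun t : ℕ => (t : ZMod (2*n))) h
      simp only [Nat.cast_add, ZMod.natCast_self, add_zero] at hc
      rw [← hc]
    · right
      have hc := congrArg (fun t : ℕ => (t : ZMod (2*n))) h
      simp only [Nat.cast_add, ZMod.natCast_self, add_zero] at hc
      rw [← hc]
  have hne : (a : ZMod (2*n)) ≠ (c : ZMod (2*n)) := by
    intro he
    have hd0 : (d : ZMod (2*n)) = 0 := by
      rcases hcast with h'|h'
      · rw [he] at h'
        exact (left_eq_add.mp h')
      · rw [he] at h'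
        exact (left_eq_add.mp h')
    rw [ZMod.natCast_eq_zero_iff] at hd0
    have := Nat.le_of_dvd (by omega) hd0
    omega
  rw [HararyOddEven, SimpleGraph.fromRel_adj]
  rcases hcast with h'|h'
  · exact ⟨hne, Or.inl (Or.inl ⟨d, hd1, hdm, h'⟩)⟩
  · exact ⟨hne, Or.inr (Or.inl ⟨d, hd1, hdm, h'⟩)⟩

lemma cast_ne' {n : ℕ} (hn : 0 < n) (c1 c2 : ℕ) (h1 : c1 < 2*n) (h2 : c2 < 2*n) (hne : c1 ≠ c2) :
    (c1 : ZMod (2*n)) ≠ (c2 : ZMod (2*n)) := by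
  haveI : NeZero (2*n) := ⟨by omega⟩
  intro h
  apply hne
  have := congrArg ZMod.val h
  rwa [ZMod.val_cast_of_lt h1, ZMod.val_cast_of_lt h2] at this

lemma two_le_ncard {α : Type*} {S N : Set α} {s1 s2 : α} (hfin : (N ∩ S).Finite)
    (h1 : s1 ∈ N) (h2 : s2 ∈ N) (m1 : s1 ∈ S) (m2 : s2 ∈ S) (hne : s1 ≠ s2) :
    2 ≤ (N ∩ S).ncard := by
  have hsub : ({s1, s2} : Set α) ⊆ N ∩ S := by
    intro x hx
    rcases hx with rfl | hx
    · exact ⟨h1, m1⟩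
    · rw [Set.mem_singleton_iff] at hx; subst hx; exact ⟨h2, m2⟩
  calc 2 = ({s1, s2} : Set α).ncard := (Set.ncard_pair hne).symm
    _ ≤ (N ∩ S).ncard := Set.ncard_le_ncard hsub hfin

lemma harary_deg_le (m n : ℕ) (hn : 0 < n) (s : ZMod (2*n)) :
    ((HararyOddEven m n).neighborSet s).ncard ≤ 2*m + 1 := by
  haveI : NeZero (2*n) := ⟨by omega⟩
  have hnn : ((n : ℕ) : ZMod (2*n)) + ((n : ℕ) : ZMod (2*n)) = 0 := by
    rw [← Nat.cast_add, show n + n = 2*n from by ring, ZMod.natCast_self]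
  have hneg : -((n : ℕ) : ZMod (2*n)) = ((n : ℕ) : ZMod (2*n)) := neg_eq_of_add_eq_zero_left hnn
  have hsub : (HararyOddEven m n).neighborSet s ⊆
      ((fun d : ℕ => s + (d : ZMod (2*n))) '' (Set.Icc 1 m)) ∪
      ((fun d : ℕ => s - (d : ZMod (2*n))) '' (Set.Icc 1 m)) ∪ {s + (n : ZMod (2*n))} := by
    intro v hv
    rw [SimpleGraph.mem_neighborSet, HararyOddEven, SimpleGraph.fromRel_adj] at hv
    obtain ⟨-, h⟩ := hv
    rcases h with (⟨d, hd1, hdm, rfl⟩ | rfl) | (⟨d, hd1, hdm, hd⟩ | hd)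
    · exact Or.inl (Or.inl ⟨d, Set.mem_Icc.mpr ⟨hd1, hdm⟩, rfl⟩)
    · exact Or.inr rfl
    · refine Or.inl (Or.inr ⟨d, Set.mem_Icc.mpr ⟨hd1, hdm⟩, ?_⟩)
      rw [hd]; ring
    · refine Or.inr ?_
      rw [Set.mem_singleton_iff, hd, add_assoc, hnn, add_zero]
  calc ((HararyOddEven m n).neighborSet s).ncard
      ≤ (((fun d : ℕ => s + (d : ZMod (2*n))) '' (Set.Icc 1 m)) ∪
      ((fun d : ℕ => s - (d : ZMod (2*n))) '' (Set.Icc 1 m)) ∪ {s + (n : ZMod (2*n))}).ncard :=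
        Set.ncard_le_ncard hsub (Set.toFinite _)
    _ ≤ (((fun d : ℕ => s + (d : ZMod (2*n))) '' (Set.Icc 1 m)) ∪
      ((fun d : ℕ => s - (d : ZMod (2*n))) '' (Set.Icc 1 m))).ncard +
        ({s + (n : ZMod (2*n))} : Set (ZMod (2*n))).ncard := Set.ncard_union_le _ _
    _ ≤ ((fun d : ℕ => s + (d : ZMod (2*n))) '' (Set.Icc 1 m)).ncard +
        ((fun d : ℕ => s - (d : ZMod (2*n))) '' (Set.Icc 1 m)).ncard + 1 := by
        have := Set.ncard_union_le ((fun d : ℕ => s + (d : ZMod (2*n))) '' (Set.Icc 1 m))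
          ((fun d : ℕ => s - (d : ZMod (2*n))) '' (Set.Icc 1 m))
        have h1 : ({s + (n : ZMod (2*n))} : Set (ZMod (2*n))).ncard = 1 := Set.ncard_singleton _
        omega
    _ ≤ m + m + 1 := by
        have hIcc : (Set.Icc 1 m : Set ℕ).ncard = m := by
          rw [show (Set.Icc 1 m : Set ℕ) = ↑(Finset.Icc 1 m) from by simp,
            Set.ncard_coe_finset, Nat.card_Icc]
          omega
        have g1 := Set.ncard_image_le (f := fun d : ℕ => s + (d : ZMod (2*n)))
          (s := Set.Icc 1 m) (Set.toFinite _)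
        have g2 := Set.ncard_image_le (f := fun d : ℕ => s - (d : ZMod (2*n)))
          (s := Set.Icc 1 m) (Set.toFinite _)
        omega
    _ ≤ 2*m + 1 := by omega

lemma harary_lower (m n ℓ r : ℕ) (h1 : 2 * n = (2 * m + 1) * ℓ + r) (hℓ : 1 ≤ ℓ)
    (hr1 : 1 ≤ r) (hlrm : ℓ + r < m) (S : Set (ZMod (2*n)))
    (hS : IsKTupleTotalDomSet (HararyOddEven m n) 2 S) : 2*ℓ + 1 ≤ S.ncard := by
  classical
  have hT : 2 * n = 2 * m * ℓ + (ℓ + r) := by rw [h1]; ring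
  have hTm : 2 * m ≤ 2 * m * ℓ := by
    have := Nat.mul_le_mul_left (2*m) hℓ
    simpa using this
  have hn0 : 0 < n := by omega
  haveI : NeZero (2*n) := ⟨by omega⟩
  set G := HararyOddEven m n with hG
  set F : Finset (ZMod (2*n)) := S.toFinset with hF
  have hFS : ∀ x, x ∈ F ↔ x ∈ S := by simp [hF]
  have hFcard : F.card = S.ncard := (Set.ncard_eq_toFinset_card' S).symm
  -- each term as a filtered card
  have hterm : ∀ v : ZMod (2*n), (G.neighborSet v ∩ S).ncard = (F.filter (fun s => G.Adj v s)).card := by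
    intro v
    rw [← Set.ncard_coe_finset]
    congr 1
    ext x
    simp [hFS, SimpleGraph.mem_neighborSet, and_comm]
  have hsum1 : 2 * (2*n) ≤ ∑ v : ZMod (2*n), (F.filter (fun s => G.Adj v s)).card := by
    calc 2 * (2*n) = ∑ _v : ZMod (2*n), 2 := by
          rw [Finset.sum_const, Finset.card_univ, ZMod.card]
          ring
      _ ≤ _ := Finset.sum_le_sum (fun v _ => by rw [← hterm v]; exact hS v)
  have hswap : ∑ v : ZMod (2*n), (F.filter (fun s => G.Adj v s)).card
      = ∑ s ∈ F, (Finset.univ.filter (fun v => G.Adj v s)).card := by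
    simp only [Finset.card_filter]
    rw [Finset.sum_comm' ]
    · simp
  have hdeg : ∀ s : ZMod (2*n), (Finset.univ.filter (fun v => G.Adj v s)).card ≤ 2*m + 1 := by
    intro s
    have : ((Finset.univ.filter (fun v => G.Adj v s)) : Finset (ZMod (2*n)))
        = (G.neighborSet s).toFinset := by
      ext x
      simp [SimpleGraph.mem_neighborSet, SimpleGraph.adj_comm]
    rw [this]
    have := harary_deg_le m n hn0 s
    rwa [Set.ncard_eq_toFinset_card'] at this
  have hsum2 : ∑ s ∈ F, (Finset.univ.filter (fun v => G.Adj v s)).card ≤ F.card * (2*m+1) := by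
    calc _ ≤ ∑ _s ∈ F, (2*m+1) := Finset.sum_le_sum (fun s _ => hdeg s)
      _ = F.card * (2*m+1) := by rw [Finset.sum_const, smul_eq_mul]
  have hkey : 2 * (2*n) ≤ S.ncard * (2*m+1) := by
    rw [← hFcard]
    omega
  by_contra hcon
  push_neg at hcon
  have h' : S.ncard * (2*m+1) ≤ (2*ℓ) * (2*m+1) := Nat.mul_le_mul_right _ (by omega)
  have h'' : (2*ℓ) * (2*m+1) + 2*r = 2*(2*n) := by rw [h1]; ring
  omega

lemma harary_dom (m n ℓ r : ℕ) (h1 : 2 * n = (2 * m + 1) * ℓ + r) (hℓ : 1 ≤ ℓ)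
    (hr1 : 1 ≤ r) (hlrm : ℓ + r < m) :
    IsKTupleTotalDomSet (HararyOddEven m n) 2
      {x : ZMod (2 * n) | (∃ i : ℕ, i < ℓ ∧
        (x = ((2 * m * i + 1 : ℕ) : ZMod (2 * n)) ∨
         x = ((2 * m * i + (m + 1) : ℕ) : ZMod (2 * n)))) ∨
        x = ((2 * n - m + 1 : ℕ) : ZMod (2 * n))} := by
  set Sset : Set (ZMod (2*n)) := {x : ZMod (2 * n) | (∃ i : ℕ, i < ℓ ∧
        (x = ((2 * m * i + 1 : ℕ) : ZMod (2 * n)) ∨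
         x = ((2 * m * i + (m + 1) : ℕ) : ZMod (2 * n)))) ∨
        x = ((2 * n - m + 1 : ℕ) : ZMod (2 * n))} with hSdef
  -- basic numeric facts
  set T := 2 * m * ℓ with hTdef
  have hT : 2 * n = T + (ℓ + r) := by rw [h1, hTdef]; ring
  have hTm : 2 * m ≤ T := by
    have := Nat.mul_le_mul_left (2*m) hℓ
    simpa [hTdef] using this
  have hm3 : 3 ≤ m := by omega
  have hn0 : 0 < n := by omega
  have hm2n : m < 2*n := by omega
  have hTm1 : m * (2*ℓ - 1) + m = T := by
    have e1 : m * (2*ℓ - 1) + m = m * ((2*ℓ - 1) + 1) := by ring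
    have e2 : (2*ℓ - 1) + 1 = 2*ℓ := by omega
    rw [e1, e2, hTdef]; ring
  have hTm2 : m * (2*ℓ - 2) + 2*m = T := by
    have e1 : m * (2*ℓ - 2) + 2*m = m * ((2*ℓ - 2) + 2) := by ring
    have e2 : (2*ℓ - 2) + 2 = 2*ℓ := by omega
    rw [e1, e2, hTdef]; ring
  haveI : NeZero (2*n) := ⟨by omega⟩
  -- membership of chain points
  have hchain : ∀ j : ℕ, j < 2*ℓ → ((m * j + 1 : ℕ) : ZMod (2*n)) ∈ Sset := by
    intro j hj
    rcases Nat.even_or_odd j with ⟨i, hi⟩ | ⟨i, hi⟩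
    · exact Or.inl ⟨i, by omega, Or.inl (by rw [hi]; congr 1; ring)⟩
    · exact Or.inl ⟨i, by omega, Or.inr (by rw [hi]; congr 1; ring)⟩
  have hextra : ((2*n - m + 1 : ℕ) : ZMod (2*n)) ∈ Sset := Or.inr rfl
  intro v
  set a := v.val with hadef
  have ha : a < 2*n := ZMod.val_lt v
  have hv : v = (a : ZMod (2*n)) := by exact_mod_cast (ZMod.natCast_rightInverse v).symm
  have main : ∀ c₁ c₂ d₁ d₂ : ℕ, c₁ < 2*n → c₂ < 2*n → c₁ ≠ c₂ →
      (c₁ : ZMod (2*n)) ∈ Sset → (c₂ : ZMod (2*n)) ∈ Sset →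
      1 ≤ d₁ → d₁ ≤ m → 1 ≤ d₂ → d₂ ≤ m →
      (a + d₁ = c₁ ∨ c₁ + d₁ = a ∨ a + d₁ = c₁ + 2*n ∨ c₁ + d₁ = a + 2*n) →
      (a + d₂ = c₂ ∨ c₂ + d₂ = a ∨ a + d₂ = c₂ + 2*n ∨ c₂ + d₂ = a + 2*n) →
      2 ≤ ((HararyOddEven m n).neighborSet v ∩ Sset).ncard := by
    intro c₁ c₂ d₁ d₂ hc1 hc2 hcc hm1 hm2 hd11 hd1m hd21 hd2m he1 he2
    have adj1 := harary_adj hn0 a c₁ d₁ hd11 hd1m hm2n he1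
    have adj2 := harary_adj hn0 a c₂ d₂ hd21 hd2m hm2n he2
    rw [hv]
    exact two_le_ncard (Set.toFinite _) adj1 adj2 hm1 hm2 (cast_ne' hn0 c₁ c₂ hc1 hc2 hcc)
  show 2 ≤ ((HararyOddEven m n).neighborSet v ∩ Sset).ncard
  rcases Nat.lt_or_ge a 1 with h0 | h11
  · -- a = 0
    exact main (2*n - m + 1) (m * 0 + 1) (m - 1) 1 (by omega) (by omega) (by omega)
      hextra (hchain 0 (by omega)) (by omega) (by omega) (by omega) (by omega)
      (by omega) (by omega)
  rcases Nat.lt_or_ge a (T - m + 2) with hA | hB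
  · -- chain region 1 ≤ a ≤ T - m + 1
    obtain ⟨q, s, heq, hs⟩ : ∃ q s, m * q + s = a - 1 ∧ s < m :=
      ⟨(a - 1) / m, (a - 1) % m, Nat.div_add_mod _ _, Nat.mod_lt _ (by omega)⟩
    have hq2 : q < 2*ℓ := by
      by_contra hc
      push_neg at hc
      have h' : m * (2*ℓ) ≤ m * q := Nat.mul_le_mul_left m hc
      have h'' : m * (2*ℓ) = T := by rw [hTdef]; ring
      omega
    rcases Nat.lt_or_ge s 1 with hs0 | hs1
    · -- s = 0, a = m*q + 1
      rcases Nat.lt_or_ge q 1 with hq0 | hq1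
      · -- q = 0, a = 1
        have hq0' : q = 0 := by omega
        subst hq0'
        simp only [Nat.mul_zero, Nat.zero_add] at heq
        exact main (2*n - m + 1) (m * 1 + 1) m m (by omega) (by omega) (by omega)
          hextra (hchain 1 (by omega)) (by omega) (by omega) (by omega) (by omega)
          (by omega) (by omega)
      · -- q ≥ 1
        have hmulq : m * (q - 1) + m = m * q := by
          have e1 : m * (q - 1) + m = m * ((q - 1) + 1) := by ring
          have e2 : (q - 1) + 1 = q := by omega
          rw [e1, e2]
        rcases Nat.lt_or_ge q (2*ℓ - 1) with hqlt | hqe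
        · -- q ≤ 2ℓ - 2 : right neighbor is chain q+1
          have hmulq2 : m * (q + 1) = m * q + m := by ring
          have hbound : m * (q + 1) ≤ m * (2*ℓ - 1) := Nat.mul_le_mul_left m (by omega)
          exact main (m * (q - 1) + 1) (m * (q + 1) + 1) m m (by omega) (by omega) (by omega)
            (hchain (q - 1) (by omega)) (hchain (q + 1) (by omega)) (by omega) (by omega)
            (by omega) (by omega) (by omega) (by omega)
        · -- q = 2ℓ - 1 : a = T - m + 1, right neighbor is extra point
          have hqeq : q = 2*ℓ - 1 := by omega
          have hmq : m * q + m = T := by rw [hqeq]; exact hTm1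
          exact main (m * (q - 1) + 1) (2*n - m + 1) m (ℓ + r) (by omega) (by omega) (by omega)
            (hchain (q - 1) (by omega)) hextra (by omega) (by omega) (by omega) (by omega)
            (by omega) (by omega)
    · -- s ≥ 1
      have hq3 : q ≤ 2*ℓ - 2 := by
        by_contra hc
        push_neg at hc
        have h' : m * (2*ℓ - 1) ≤ m * q := Nat.mul_le_mul_left m (by omega)
        omega
      have hmulq2 : m * (q + 1) = m * q + m := by ring
      have hbound : m * (q + 1) ≤ m * (2*ℓ - 1) := Nat.mul_le_mul_left m (by omega)
      exact main (m * q + 1) (m * (q + 1) + 1) s (m - s) (by omega) (by omega) (by omega)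
        (hchain q (by omega)) (hchain (q + 1) (by omega)) (by omega) (by omega)
        (by omega) (by omega) (by omega) (by omega)
  -- a ≥ T - m + 2
  rcases Nat.lt_or_ge a (2*n - m + 1) with hB1 | hB2
  · -- T - m + 2 ≤ a ≤ 2n - m : between chain end and extra point
    exact main (m * (2*ℓ - 1) + 1) (2*n - m + 1) (a - (T - m + 1)) (2*n - m + 1 - a)
      (by omega) (by omega) (by omega)
      (hchain (2*ℓ - 1) (by omega)) hextra (by omega) (by omega) (by omega) (by omega)
      (by omega) (by omega)
  rcases Nat.lt_or_ge a (2*n - m + 2) with hBe | hB3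
  · -- a = 2n - m + 1 (the extra point itself)
    exact main (m * (2*ℓ - 1) + 1) (m * 0 + 1) (ℓ + r) m (by omega) (by omega) (by omega)
      (hchain (2*ℓ - 1) (by omega)) (hchain 0 (by omega)) (by omega) (by omega)
      (by omega) (by omega) (by omega) (by omega)
  · -- 2n - m + 2 ≤ a ≤ 2n - 1
    exact main (2*n - m + 1) (m * 0 + 1) (a - (2*n - m + 1)) (2*n + 1 - a)
      (by omega) (by omega) (by omega)
      hextra (hchain 0 (by omega)) (by omega) (by omega) (by omega) (by omega)
      (by omega) (by omega)

lemma Sset_ncard (m n ℓ r : ℕ) (h1 : 2 * n = (2 * m + 1) * ℓ + r) (hℓ : 1 ≤ ℓ)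
    (hr1 : 1 ≤ r) (hlrm : ℓ + r < m) :
    ({x : ZMod (2 * n) | (∃ i : ℕ, i < ℓ ∧
        (x = ((2 * m * i + 1 : ℕ) : ZMod (2 * n)) ∨
         x = ((2 * m * i + (m + 1) : ℕ) : ZMod (2 * n)))) ∨
        x = ((2 * n - m + 1 : ℕ) : ZMod (2 * n))} : Set (ZMod (2*n))).ncard = 2 * ℓ + 1 := by
  have hT : 2 * n = 2 * m * ℓ + (ℓ + r) := by rw [h1]; ring
  have hTm : 2 * m ≤ 2 * m * ℓ := by
    have := Nat.mul_le_mul_left (2*m) hℓ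
    simpa using this
  have hm3 : 3 ≤ m := by omega
  have hn0 : 0 < n := by omega
  haveI : NeZero (2*n) := ⟨by omega⟩
  set rep : ℕ → ℕ := fun j => if j < 2*ℓ then m * j + 1 else 2*n - m + 1 with hrep
  have hTm1 : m * (2*ℓ - 1) + m = 2 * m * ℓ := by
    have e1 : m * (2*ℓ - 1) + m = m * ((2*ℓ - 1) + 1) := by ring
    have e2 : (2*ℓ - 1) + 1 = 2*ℓ := by omega
    rw [e1, e2]; ring
  have hrepbd : ∀ j, j < 2*ℓ + 1 → rep j < 2*n := by
    intro j hj
    by_cases h : j < 2*ℓ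
    · have : m * j ≤ m * (2*ℓ - 1) := Nat.mul_le_mul_left m (by omega)
      simp only [hrep, if_pos h]
      omega
    · simp only [hrep, if_neg h]
      omega
  have hrepinj : ∀ j₁ j₂, j₁ < 2*ℓ + 1 → j₂ < 2*ℓ + 1 → rep j₁ = rep j₂ → j₁ = j₂ := by
    intro j₁ j₂ hj₁ hj₂ hval
    by_cases e1 : j₁ < 2*ℓ <;> by_cases e2 : j₂ < 2*ℓ
    · simp only [hrep, if_pos e1, if_pos e2] at hval
      have := Nat.eq_of_mul_eq_mul_left (show 0 < m by omega) (by omega : m * j₁ = m * j₂)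
      exact this
    · simp only [hrep, if_pos e1, if_neg e2] at hval
      have : m * j₁ ≤ m * (2*ℓ - 1) := Nat.mul_le_mul_left m (by omega)
      omega
    · simp only [hrep, if_neg e1, if_pos e2] at hval
      have : m * j₂ ≤ m * (2*ℓ - 1) := Nat.mul_le_mul_left m (by omega)
      omega
    · omega
  have hseteq : ({x : ZMod (2 * n) | (∃ i : ℕ, i < ℓ ∧
        (x = ((2 * m * i + 1 : ℕ) : ZMod (2 * n)) ∨
         x = ((2 * m * i + (m + 1) : ℕ) : ZMod (2 * n)))) ∨
        x = ((2 * n - m + 1 : ℕ) : ZMod (2 * n))} : Set (ZMod (2*n)))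
      = ↑((Finset.range (2*ℓ + 1)).image (fun j => ((rep j : ℕ) : ZMod (2*n)))) := by
    ext x
    simp only [Set.mem_setOf_eq, Finset.coe_image, Set.mem_image, Finset.mem_coe,
      Finset.mem_range]
    constructor
    · rintro (⟨i, hi, hx | hx⟩ | hx)
      · refine ⟨2*i, by omega, ?_⟩
        rw [hx]
        simp only [hrep, if_pos (show 2*i < 2*ℓ by omega)]
        congr 1
        ring
      · refine ⟨2*i + 1, by omega, ?_⟩
        rw [hx]
        simp only [hrep, if_pos (show 2*i + 1 < 2*ℓ by omega)]
        congr 1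
        ring
      · refine ⟨2*ℓ, by omega, ?_⟩
        rw [hx]
        simp only [hrep, if_neg (lt_irrefl (2*ℓ))]
    · rintro ⟨j, hj, rfl⟩
      by_cases h : j < 2*ℓ
      · simp only [hrep, if_pos h]
        rcases Nat.even_or_odd j with ⟨i, hi⟩ | ⟨i, hi⟩
        · refine Or.inl ⟨i, by omega, Or.inl ?_⟩
          rw [hi]
          congr 1
          ring
        · refine Or.inl ⟨i, by omega, Or.inr ?_⟩
          rw [hi]
          congr 1
          ring
      · simp only [hrep, if_neg h]
        exact Or.inr trivial
  rw [hseteq, Set.ncard_coe_finset]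
  rw [Finset.card_image_of_injOn, Finset.card_range]
  intro j₁ hj₁ j₂ hj₂ hcast
  simp only [Finset.coe_range, Set.mem_Iio] at hj₁ hj₂
  apply hrepinj j₁ j₂ hj₁ hj₂
  have := congrArg ZMod.val hcast
  rwa [ZMod.val_cast_of_lt (hrepbd j₁ hj₁), ZMod.val_cast_of_lt (hrepbd j₂ hj₂)] at this

end HararyAux

theorem stmt_11 (m n ℓ r ℓ' r' : ℕ)
    (h1 : 2 * n = (2 * m + 1) * ℓ + r) (hr : r ≤ 2 * m) (hℓ : 1 ≤ ℓ)
    (h2 : ℓ + r = 2 * m * ℓ' + r') (hr' : r' < 2 * m)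
    (hr1 : 1 ≤ r) (hr2 : r ≤ m) (hℓ'0 : ℓ' = 0) (hr'1 : 1 ≤ r') (hr'2 : r' < m) :
    kTupleTotalDomNum (HararyOddEven m n) 2 = ⌈(4 * n : ℚ) / (2 * m + 1 : ℚ)⌉₊ ∧
    ⌈(4 * n : ℚ) / (2 * m + 1 : ℚ)⌉₊ = 2 * ℓ + 1 ∧
    IsKTupleTotalDomSet (HararyOddEven m n) 2
      {x : ZMod (2 * n) | (∃ i : ℕ, i < ℓ ∧
        (x = ((2 * m * i + 1 : ℕ) : ZMod (2 * n)) ∨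
         x = ((2 * m * i + (m + 1) : ℕ) : ZMod (2 * n)))) ∨
        x = ((2 * n - m + 1 : ℕ) : ZMod (2 * n))} := by
  have hr'eq : ℓ + r = r' := by
    rw [hℓ'0] at h2
    simpa using h2
  have hlrm : ℓ + r < m := by omega
  have hdom := harary_dom m n ℓ r h1 hℓ hr1 hlrm
  have hcard := Sset_ncard m n ℓ r h1 hℓ hr1 hlrm
  have hceil : ⌈(4 * n : ℚ) / (2 * m + 1 : ℚ)⌉₊ = 2 * ℓ + 1 := by
    have hpos : (0:ℚ) < 2*m+1 := by positivity
    have hA : (2*m+1) * (2*ℓ) + 2*r = 4*n := by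
      rw [show 4*n = 2*(2*n) from by ring, h1]; ring
    have hAq : ((2*m+1) * (2*ℓ) : ℚ) + 2*r = 4*n := by exact_mod_cast hA
    have hrq1 : (1:ℚ) ≤ r := by exact_mod_cast hr1
    have hrq2 : (r:ℚ) ≤ m := by exact_mod_cast hr2
    rw [Nat.ceil_eq_iff (by omega)]
    constructor
    · rw [lt_div_iff₀ hpos]
      push_cast
      nlinarith [hAq, hrq1]
    · rw [div_le_iff₀ hpos]
      push_cast
      nlinarith [hAq, hrq2]
  refine ⟨?_, hceil, hdom⟩
  rw [hceil]
  have hmem : 2*ℓ+1 ∈ {k | ∃ S : Set (ZMod (2*n)),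
      IsKTupleTotalDomSet (HararyOddEven m n) 2 S ∧ S.ncard = k} := ⟨_, hdom, hcard⟩
  apply le_antisymm
  · exact Nat.sInf_le hmem
  · apply le_csInf ⟨_, hmem⟩
    rintro b ⟨S, hS, rfl⟩
    exact harary_lower m n ℓ r h1 hℓ hr1 hlrm S hS
end

section
/- For the Harary graph H_{2m+1,2n+1}, γ_{×2,t}(H_{2m+1,2n+1}) ≥ ⌈(4n+1)/(2m+1)⌉. -/
open Finset

open scoped Classical

lemma zmod_eq_n_iff (n : ℕ) (v : ZMod (2*n+1)) : v = (n : ZMod (2*n+1)) ↔ v.val = n := by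
  constructor
  · rintro rfl
    exact ZMod.val_cast_of_lt (by omega)
  · intro h
    rw [← ZMod.natCast_zmod_val v, h]

lemma harary_deg_le_s14 (m n : ℕ) (v : ZMod (2*n+1)) :
    ((HararyOddOdd m n).neighborFinset v).card
      ≤ 2*m + 1 + (if v = (n : ZMod (2*n+1)) then 1 else 0) := by
  classical
  set E : Finset (ZMod (2*n+1)) :=
    if v = (n : ZMod (2*n+1)) then {v + (n : ZMod (2*n+1)), v - (n : ZMod (2*n+1))}
    else if v.val < n then {v + (n : ZMod (2*n+1))} else {v - (n : ZMod (2*n+1))} with hE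
  have hsub : (HararyOddOdd m n).neighborFinset v ⊆
      (((Finset.Icc 1 m).image fun d : ℕ => v + (d : ZMod (2*n+1))) ∪
      ((Finset.Icc 1 m).image fun d : ℕ => v - (d : ZMod (2*n+1)))) ∪ E := by
    intro w hw
    rw [SimpleGraph.mem_neighborFinset, HararyOddOdd, SimpleGraph.fromRel_adj] at hw
    obtain ⟨hne, h⟩ := hw
    rcases h with (⟨d, hd1, hdm, rfl⟩ | ⟨i₀, hi₀, hvi, rfl⟩) | (⟨d, hd1, hdm, hvw⟩ | ⟨i₀, hi₀, rfl, hvi⟩)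
    · apply Finset.mem_union_left
      apply Finset.mem_union_left
      exact Finset.mem_image.2 ⟨d, Finset.mem_Icc.2 ⟨hd1, hdm⟩, rfl⟩
    · -- v = i₀, w = i₀ + n, so w = v + n and v.val = i₀ ≤ n
      have hvval : v.val = i₀ := by rw [hvi]; exact ZMod.val_cast_of_lt (by omega)
      have hw' : ((i₀ + n : ℕ) : ZMod (2*n+1)) = v + (n : ZMod (2*n+1)) := by
        rw [hvi]; push_cast; ring
      rw [hw']
      apply Finset.mem_union_right
      rw [hE]
      by_cases hvn : v = (n : ZMod (2*n+1))
      · simp [hvn]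
      · have : v.val < n := by
          have := (zmod_eq_n_iff n v).not.1 hvn
          omega
        simp [hvn, this]
    · -- v = w + d, so w = v - d
      have : w = v - (d : ZMod (2*n+1)) := by rw [hvw]; ring
      rw [this]
      apply Finset.mem_union_left
      apply Finset.mem_union_right
      exact Finset.mem_image.2 ⟨d, Finset.mem_Icc.2 ⟨hd1, hdm⟩, rfl⟩
    · -- w = i₀, v = i₀ + n, so w = v - n and v.val = i₀ + n ≥ n
      have hvval : v.val = i₀ + n := by rw [hvi]; exact ZMod.val_cast_of_lt (by omega)
      have hw' : (i₀ : ZMod (2*n+1)) = v - (n : ZMod (2*n+1)) := by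
        rw [hvi]; push_cast; ring
      rw [hw']
      apply Finset.mem_union_right
      rw [hE]
      by_cases hvn : v = (n : ZMod (2*n+1))
      · simp [hvn]
      · have : ¬ v.val < n := by omega
        simp [hvn, this]
  have hEcard : E.card ≤ 1 + (if v = (n : ZMod (2*n+1)) then 1 else 0) := by
    rw [hE]; split_ifs with h1 h2
    · exact le_trans (Finset.card_insert_le _ _) (by simp)
    · simp
    · simp
  have h1 := Finset.card_le_card hsub
  have h2 := Finset.card_union_le
    (((Finset.Icc 1 m).image fun d : ℕ => v + (d : ZMod (2*n+1))) ∪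
      ((Finset.Icc 1 m).image fun d : ℕ => v - (d : ZMod (2*n+1)))) E
  have h3 := Finset.card_union_le ((Finset.Icc 1 m).image fun d : ℕ => v + (d : ZMod (2*n+1)))
      ((Finset.Icc 1 m).image fun d : ℕ => v - (d : ZMod (2*n+1)))
  have h4 := Finset.card_image_le (s := Finset.Icc 1 m) (f := fun d : ℕ => v + (d : ZMod (2*n+1)))
  have h5 := Finset.card_image_le (s := Finset.Icc 1 m) (f := fun d : ℕ => v - (d : ZMod (2*n+1)))
  have h6 : (Finset.Icc 1 m).card = m := by simp [Nat.card_Icc]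
  split_ifs at hEcard ⊢ <;> omega
theorem stmt_14 (m n : ℕ) (hm : 1 ≤ m) (hmn : m < n) :
    ⌈(4 * n + 1 : ℚ) / (2 * m + 1 : ℚ)⌉₊ ≤ kTupleTotalDomNum (HararyOddOdd m n) 2 := by
  classical
  have hn : 2 ≤ n := by omega
  haveI : Fact (1 < 2*n+1) := ⟨by omega⟩
  set G := HararyOddOdd m n with hG
  -- Key counting bound for any 2-tuple total dominating set
  have key : ∀ S : Set (ZMod (2*n+1)), IsKTupleTotalDomSet G 2 S →
      4*n+1 ≤ (2*m+1) * S.ncard := by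
    intro S hS
    set S' : Finset (ZMod (2*n+1)) := S.toFinset with hS'
    have hcard : S.ncard = S'.card := Set.ncard_eq_toFinset_card' S
    have h1 : ∀ v : ZMod (2*n+1), 2 ≤ (G.neighborFinset v ∩ S').card := by
      intro v
      have hv := hS v
      have heq : (G.neighborSet v ∩ S).ncard = (G.neighborFinset v ∩ S').card := by
        rw [Set.ncard_eq_toFinset_card' (G.neighborSet v ∩ S)]
        congr 1
        ext w
        simp [SimpleGraph.mem_neighborFinset, hS']
      omega
    have h2 : 2 * (2*n+1) ≤ ∑ v : ZMod (2*n+1), (G.neighborFinset v ∩ S').card := by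
      calc 2*(2*n+1) = ∑ _v : ZMod (2*n+1), 2 := by
            simp [Finset.sum_const, Finset.card_univ, ZMod.card, Nat.mul_comm]
        _ ≤ _ := Finset.sum_le_sum fun v _ => h1 v
    have h3 : ∑ v : ZMod (2*n+1), (G.neighborFinset v ∩ S').card
        = ∑ w ∈ S', (G.neighborFinset w).card := by
      have step1 : ∀ v : ZMod (2*n+1),
          (G.neighborFinset v ∩ S').card = ∑ w ∈ S', if G.Adj v w then 1 else 0 := by
        intro v
        rw [← Finset.card_filter]
        congr 1
        ext w
        simp [SimpleGraph.mem_neighborFinset, and_comm]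
      have step2 : ∀ w : ZMod (2*n+1),
          (G.neighborFinset w).card = ∑ v : ZMod (2*n+1), if G.Adj v w then 1 else 0 := by
        intro w
        rw [← Finset.card_filter]
        congr 1
        ext v
        simp [SimpleGraph.mem_neighborFinset, SimpleGraph.adj_comm]
      simp only [step1, step2]
      exact Finset.sum_comm
    have h4 : ∑ w ∈ S', (G.neighborFinset w).card ≤ (2*m+1) * S'.card + 1 := by
      have hb : ∀ w ∈ S', (G.neighborFinset w).card
          ≤ 2*m + 1 + (if w = (n : ZMod (2*n+1)) then 1 else 0) :=
        fun w _ => harary_deg_le_s14 m n w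
      calc ∑ w ∈ S', (G.neighborFinset w).card
          ≤ ∑ w ∈ S', (2*m + 1 + (if w = (n : ZMod (2*n+1)) then 1 else 0)) :=
            Finset.sum_le_sum hb
        _ = (2*m+1) * S'.card + ∑ w ∈ S', (if w = (n : ZMod (2*n+1)) then 1 else 0) := by
            rw [Finset.sum_add_distrib, Finset.sum_const, smul_eq_mul, mul_comm]
        _ ≤ (2*m+1) * S'.card + 1 := by
            gcongr
            rw [← Finset.card_filter]
            calc (S'.filter (fun w => w = (n : ZMod (2*n+1)))).card
                ≤ ({(n : ZMod (2*n+1))} : Finset _).card := by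
                  apply Finset.card_le_card
                  intro w hw
                  simp only [Finset.mem_filter] at hw
                  simp [hw.2]
              _ = 1 := Finset.card_singleton _
    rw [hcard]
    omega
  -- The defining set is nonempty (take S = univ)
  have huniv : IsKTupleTotalDomSet G 2 Set.univ := by
    intro v
    rw [Set.inter_univ]
    have hadj1 : G.Adj v (v + 1) := by
      rw [hG, HararyOddOdd, SimpleGraph.fromRel_adj]
      constructor
      · intro h
        have : (1 : ZMod (2*n+1)) = 0 := by linear_combination -h
        simp at this
      · exact Or.inl (Or.inl ⟨1, le_refl 1, hm, by push_cast; ring⟩)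
    have hadj2 : G.Adj v (v - 1) := by
      rw [hG, HararyOddOdd, SimpleGraph.fromRel_adj]
      constructor
      · intro h
        have : (1 : ZMod (2*n+1)) = 0 := by linear_combination h
        simp at this
      · exact Or.inr (Or.inl ⟨1, le_refl 1, hm, by push_cast; ring⟩)
    have hne12 : v + 1 ≠ v - 1 := by
      intro h
      have h2 : ((2 : ℕ) : ZMod (2*n+1)) = 0 := by push_cast; linear_combination h
      rw [ZMod.natCast_eq_zero_iff] at h2
      have := Nat.le_of_dvd (by norm_num) h2
      omega
    exact (Set.one_lt_ncard (Set.toFinite (G.neighborSet v))).2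
      ⟨v + 1, hadj1, v - 1, hadj2, hne12⟩
  have hne : {r | ∃ S : Set (ZMod (2*n+1)), IsKTupleTotalDomSet G 2 S ∧ S.ncard = r}.Nonempty :=
    ⟨(Set.univ : Set (ZMod (2*n+1))).ncard, Set.univ, huniv, rfl⟩
  rw [kTupleTotalDomNum]
  apply le_csInf hne
  rintro r ⟨S, hS, rfl⟩
  have hk := key S hS
  rw [Nat.ceil_le, div_le_iff₀ (by positivity)]
  have : ((4*n+1 : ℕ) : ℚ) ≤ (((2*m+1) * S.ncard : ℕ) : ℚ) := by exact_mod_cast hk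
  push_cast at this ⊢
  linarith
end

section
/- For every Harary graph H_{2m+1,2n+1} (with 2n+1 ≥ 2m+2), γ_{×2,t}(H_{2m+1,2n+1}) ≤ ⌈(4n+1)/(2m+1)⌉ + 1. -/
def q15 (m : ℕ) : ℕ := 2*m+1
def u15 (m n : ℕ) : ℕ := n / (2*m+1)
def c15 (m n : ℕ) : ℕ := n % (2*m+1)
def E15 (m n : ℕ) : ℕ := if c15 m n < m then c15 m n else c15 m n - (m+1)
def L15 (m n : ℕ) : ℕ := 2 * u15 m n + (if c15 m n < m then 0 else 1)
def P15 (m n : ℕ) : ℕ := n - E15 m n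
def xf15 (m n j : ℕ) : ℕ := min (j/2 * (2*m+1) + (j % 2) * (m+1)) (P15 m n)
def A15 (m n : ℕ) : Finset ℕ := (Finset.range (L15 m n + 1)).image (xf15 m n)
def B15 (m n : ℕ) : Finset ℕ := (A15 m n).image (· + n)
def S15 (m n : ℕ) : Finset (ZMod (2*n+1)) := (A15 m n ∪ B15 m n).image (Nat.cast)

lemma base15 (m n : ℕ) (hm : 1 ≤ m) (hn : m+1 ≤ n) :
    n = u15 m n * (2*m+1) + c15 m n ∧ c15 m n ≤ 2*m ∧ E15 m n < m ∧
    ((c15 m n < m ∧ E15 m n = c15 m n ∧ L15 m n = 2*u15 m n ∧ P15 m n = u15 m n * (2*m+1)) ∨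
     (c15 m n = m ∧ E15 m n = 0 ∧ L15 m n = 2*u15 m n + 1 ∧ P15 m n = u15 m n * (2*m+1) + m) ∨
     (c15 m n = m+1 ∧ E15 m n = 0 ∧ L15 m n = 2*u15 m n + 1 ∧ P15 m n = u15 m n * (2*m+1) + (m+1)) ∨
     (m+2 ≤ c15 m n ∧ E15 m n = c15 m n - (m+1) ∧ L15 m n = 2*u15 m n + 1 ∧
       P15 m n = u15 m n * (2*m+1) + (m+1))) := by
  have hdm : n = u15 m n * (2*m+1) + c15 m n := by
    rw [u15, c15, Nat.div_add_mod']
  have hclt : c15 m n < 2*m+1 := Nat.mod_lt _ (by omega)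
  unfold P15 E15 L15
  generalize hUQ : u15 m n * (2*m+1) = UQ at *
  split <;> omega

lemma uqP15 (m n : ℕ) (hm : 1 ≤ m) (hn : m+1 ≤ n) : u15 m n * (2*m+1) ≤ P15 m n := by
  obtain ⟨h1, h2, h3, h4⟩ := base15 m n hm hn
  generalize u15 m n * (2*m+1) = UQ at *
  rcases h4 with ⟨_,_,_,h⟩|⟨_,_,_,h⟩|⟨_,_,_,h⟩|⟨_,_,_,h⟩ <;> omega

lemma xf_even15 (m n : ℕ) (hm : 1 ≤ m) (hn : m+1 ≤ n) (i : ℕ) (h : 2*i ≤ L15 m n) :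
    xf15 m n (2*i) = i*(2*m+1) := by
  obtain ⟨h1, h2, h3, h4⟩ := base15 m n hm hn
  have huq := uqP15 m n hm hn
  have hiu : i ≤ u15 m n := by rcases h4 with ⟨_,_,h,_⟩|⟨_,_,h,_⟩|⟨_,_,h,_⟩|⟨_,_,h,_⟩ <;> omega
  have hle : i*(2*m+1) ≤ u15 m n * (2*m+1) := Nat.mul_le_mul_right _ hiu
  unfold xf15
  have e1 : 2*i/2 = i := by omega
  have e2 : 2*i % 2 = 0 := by omega
  rw [e1, e2]
  have hle3 : i*(2*m+1) + 0*(m+1) ≤ P15 m n := by omega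
  rw [min_eq_left hle3]
  ring

lemma xf_odd15 (m n : ℕ) (i : ℕ) :
    xf15 m n (2*i+1) = min (i*(2*m+1)+(m+1)) (P15 m n) := by
  unfold xf15
  have e1 : (2*i+1)/2 = i := by omega
  have e2 : (2*i+1) % 2 = 1 := by omega
  rw [e1, e2]
  ring_nf

lemma xf_odd_lt15 (m n : ℕ) (hm : 1 ≤ m) (hn : m+1 ≤ n) (i : ℕ) (h : 2*i+1 < L15 m n) :
    xf15 m n (2*i+1) = i*(2*m+1)+(m+1) := by
  obtain ⟨h1, h2, h3, h4⟩ := base15 m n hm hn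
  have huq := uqP15 m n hm hn
  have hiu : i + 1 ≤ u15 m n := by rcases h4 with ⟨_,_,h,_⟩|⟨_,_,h,_⟩|⟨_,_,h,_⟩|⟨_,_,h,_⟩ <;> omega
  have hle : (i+1)*(2*m+1) ≤ u15 m n * (2*m+1) := Nat.mul_le_mul_right _ hiu
  have hle2 : (i+1)*(2*m+1) = i*(2*m+1) + (2*m+1) := by ring
  rw [xf_odd15]
  have : i*(2*m+1)+(m+1) ≤ P15 m n := by omega
  exact min_eq_left this

lemma xf_L15 (m n : ℕ) (hm : 1 ≤ m) (hn : m+1 ≤ n) : xf15 m n (L15 m n) = P15 m n := by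
  obtain ⟨h1, h2, h3, h4⟩ := base15 m n hm hn
  have huq := uqP15 m n hm hn
  rcases h4 with ⟨hc,hE,hL,hP⟩|⟨hc,hE,hL,hP⟩|⟨hc,hE,hL,hP⟩|⟨hc,hE,hL,hP⟩
  · rw [hL, show 2*u15 m n = 2*(u15 m n) from rfl, xf_even15 m n hm hn _ (by omega)]; omega
  all_goals
    rw [hL, xf_odd15]
    have : P15 m n ≤ u15 m n*(2*m+1)+(m+1) := by omega
    exact min_eq_right this

lemma xf0_15 (m n : ℕ) : xf15 m n 0 = 0 := by simp [xf15]

lemma xf_le_P15 (m n j : ℕ) : xf15 m n j ≤ P15 m n := min_le_right _ _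

lemma P_le_n15 (m n : ℕ) : P15 m n ≤ n := Nat.sub_le _ _

lemma mem_A15 (m n j : ℕ) (h : j ≤ L15 m n) : xf15 m n j ∈ A15 m n :=
  Finset.mem_image_of_mem _ (Finset.mem_range.2 (by omega))

lemma mem_B15 (m n a : ℕ) (h : a ∈ A15 m n) : a + n ∈ B15 m n :=
  Finset.mem_image_of_mem _ h

lemma castne15 (n : ℕ) {a b : ℕ} (ha : a < 2*n+1) (hb : b < 2*n+1) (h : a ≠ b) :
    (a : ZMod (2*n+1)) ≠ (b : ZMod (2*n+1)) := fun he =>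
  h (by rw [← ZMod.val_cast_of_lt ha, ← ZMod.val_cast_of_lt hb, he])

lemma adj_nat15 (m n : ℕ) (hmn : m < n) (w a d : ℕ) (hw : w ≤ 2*n) (ha : a ≤ 2*n)
    (h1 : 1 ≤ d) (h2 : d ≤ m)
    (hd : a = w + d ∨ w = a + d ∨ a + (2*n+1) = w + d ∨ w + (2*n+1) = a + d) :
    (HararyOddOdd m n).Adj (w : ZMod (2*n+1)) (a : ZMod (2*n+1)) := by
  have hne : (w : ZMod (2*n+1)) ≠ (a : ZMod (2*n+1)) :=
    castne15 n (by omega) (by omega) (by omega)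
  rw [HararyOddOdd, SimpleGraph.fromRel_adj]
  refine ⟨hne, ?_⟩
  have key : (a : ZMod (2*n+1)) = (w : ZMod (2*n+1)) + (d : ZMod (2*n+1)) ∨
      (w : ZMod (2*n+1)) = (a : ZMod (2*n+1)) + (d : ZMod (2*n+1)) := by
    rcases hd with h|h|h|h
    · left; rw [show ((a:ℕ):ZMod (2*n+1)) = ((w + d : ℕ) : ZMod (2*n+1)) from by rw [h]]
      push_cast; ring
    · right; rw [show ((w:ℕ):ZMod (2*n+1)) = ((a + d : ℕ) : ZMod (2*n+1)) from by rw [h]]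
      push_cast; ring
    · left
      have h5 : ((a:ℕ) : ZMod (2*n+1)) + ((2*n+1 : ℕ) : ZMod (2*n+1)) =
          ((w:ℕ) : ZMod (2*n+1)) + ((d:ℕ) : ZMod (2*n+1)) := by
        rw [← Nat.cast_add, ← Nat.cast_add, h]
      rw [ZMod.natCast_self, add_zero] at h5
      exact h5
    · right
      have h5 : ((w:ℕ) : ZMod (2*n+1)) + ((2*n+1 : ℕ) : ZMod (2*n+1)) =
          ((a:ℕ) : ZMod (2*n+1)) + ((d:ℕ) : ZMod (2*n+1)) := by
        rw [← Nat.cast_add, ← Nat.cast_add, h]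
      rw [ZMod.natCast_self, add_zero] at h5
      exact h5
  rcases key with h|h
  · exact Or.inl (Or.inl ⟨d, h1, h2, h⟩)
  · exact Or.inr (Or.inl ⟨d, h1, h2, h⟩)

lemma adj_diag15 (m n : ℕ) (hn : 1 ≤ n) (i₀ : ℕ) (hi : i₀ ≤ n) :
    (HararyOddOdd m n).Adj (i₀ : ZMod (2*n+1)) ((i₀ + n : ℕ) : ZMod (2*n+1)) := by
  have hne : (i₀ : ZMod (2*n+1)) ≠ ((i₀ + n : ℕ) : ZMod (2*n+1)) :=
    castne15 n (by omega) (by omega) (by omega)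
  rw [HararyOddOdd, SimpleGraph.fromRel_adj]
  exact ⟨hne, Or.inl (Or.inr ⟨i₀, hi, rfl, rfl⟩)⟩

lemma mem_S15 (m n x : ℕ) (h : x ∈ A15 m n ∪ B15 m n) :
    (x : ZMod (2*n+1)) ∈ (S15 m n : Finset (ZMod (2*n+1))) :=
  Finset.mem_image_of_mem _ h

lemma member_circ15 (m n : ℕ) (hm : 1 ≤ m) (hn : m+1 ≤ n) (j : ℕ) (h1 : 1 ≤ j)
    (h2 : j < L15 m n) :
    ∃ b ∈ A15 m n, b ≤ P15 m n ∧ (b + m = xf15 m n j ∨ b = xf15 m n j + m) := by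
  rcases Nat.even_or_odd j with ⟨i, hi⟩ | ⟨i, hi⟩
  · -- j = 2i, i ≥ 1
    obtain ⟨k, hk⟩ : ∃ k, j = 2*(k+1) := ⟨i-1, by omega⟩
    subst hk
    have e1 : xf15 m n (2*(k+1)) = (k+1)*(2*m+1) := xf_even15 m n hm hn _ (by omega)
    have e2 : xf15 m n (2*k+1) = k*(2*m+1)+(m+1) := xf_odd_lt15 m n hm hn _ (by omega)
    have hx : (k+1)*(2*m+1) = k*(2*m+1) + (2*m+1) := by ring
    exact ⟨xf15 m n (2*k+1), mem_A15 m n _ (by omega), xf_le_P15 m n _, Or.inl (by omega)⟩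
  · -- j = 2i+1
    subst hi
    have e1 : xf15 m n (2*i+1) = i*(2*m+1)+(m+1) := xf_odd_lt15 m n hm hn _ (by omega)
    have e2 : xf15 m n (2*(i+1)) = (i+1)*(2*m+1) := xf_even15 m n hm hn _ (by omega)
    have hx : (i+1)*(2*m+1) = i*(2*m+1) + (2*m+1) := by ring
    exact ⟨xf15 m n (2*(i+1)), mem_A15 m n _ (by omega), xf_le_P15 m n _, Or.inr (by omega)⟩

lemma position15 (m n : ℕ) (hm : 1 ≤ m) (hn : m+1 ≤ n) (w : ℕ) (h0 : 0 < w)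
    (hP : w < P15 m n) :
    (∃ j, 1 ≤ j ∧ j < L15 m n ∧ w = xf15 m n j) ∨
    (∃ a b, a ∈ A15 m n ∧ b ∈ A15 m n ∧ a < w ∧ w < b ∧ w - a ≤ m ∧ b - w ≤ m ∧
      b ≤ P15 m n) := by
  obtain ⟨h1, h2, h3, h4⟩ := base15 m n hm hn
  have huq := uqP15 m n hm hn
  have hPn := P_le_n15 m n
  obtain ⟨i, r, hw, hr⟩ : ∃ i r, w = i*(2*m+1) + r ∧ r < 2*m+1 :=
    ⟨w / (2*m+1), w % (2*m+1), by rw [Nat.div_add_mod'], Nat.mod_lt _ (by omega)⟩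
  have hiu : i ≤ u15 m n := by
    have h5 : w / (2*m+1) ≤ n / (2*m+1) := Nat.div_le_div_right (by omega)
    have h6 : w / (2*m+1) = i := by
      rw [hw, add_comm, Nat.add_mul_div_right _ _ (show 0 < 2*m+1 by omega),
        Nat.div_eq_of_lt hr, Nat.zero_add]
    have h7 : u15 m n = n / (2*m+1) := rfl
    omega
  rcases eq_or_lt_of_le hiu with hieq | hilt
  · -- i = u
    rw [hieq] at hw
    rcases h4 with ⟨hc,hE,hL,hp⟩|⟨hc,hE,hL,hp⟩|⟨hc,hE,hL,hp⟩|⟨hc,hE,hL,hp⟩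
    · omega
    all_goals {
      rcases Nat.eq_zero_or_pos r with hr0 | hr1
      · -- member j = 2u
        left
        have hu1' : 1 ≤ u15 m n := by
          rcases Nat.eq_zero_or_pos (u15 m n) with h|h
          · exfalso
            rw [h] at hw
            omega
          · exact h
        have e1 : xf15 m n (2*u15 m n) = u15 m n*(2*m+1) := xf_even15 m n hm hn _ (by omega)
        exact ⟨2*u15 m n, by omega, by omega, by omega⟩
      · -- nonmember between xf(2u) and xf L = P
        right
        have e1 : xf15 m n (2*u15 m n) = u15 m n*(2*m+1) := xf_even15 m n hm hn _ (by omega)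
        have e2 : xf15 m n (L15 m n) = P15 m n := xf_L15 m n hm hn
        exact ⟨xf15 m n (2*u15 m n), xf15 m n (L15 m n),
          mem_A15 m n _ (by omega), mem_A15 m n _ le_rfl,
          by omega, by omega, by omega, by omega, by omega⟩
    }
  · -- i < u
    have hx1 : (i+1)*(2*m+1) = i*(2*m+1) + (2*m+1) := by ring
    have hx2 : (i+1)*(2*m+1) ≤ u15 m n * (2*m+1) := Nat.mul_le_mul_right _ (by omega)
    have hL2 : 2*u15 m n ≤ L15 m n := by
      rcases h4 with ⟨_,_,h,_⟩|⟨_,_,h,_⟩|⟨_,_,h,_⟩|⟨_,_,h,_⟩ <;> omega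
    rcases Nat.eq_zero_or_pos r with hr0 | hr1
    · -- r = 0 : member j = 2i
      left
      have hi1 : 1 ≤ i := by
        rcases Nat.eq_zero_or_pos i with h|h
        · exfalso; rw [h] at hw; omega
        · exact h
      have e1 : xf15 m n (2*i) = i*(2*m+1) := xf_even15 m n hm hn _ (by omega)
      exact ⟨2*i, by omega, by omega, by omega⟩
    · rcases le_or_gt r m with hrm | hrm
      · -- 1 ≤ r ≤ m : between xf(2i) and xf(2i+1)
        right
        have e1 : xf15 m n (2*i) = i*(2*m+1) := xf_even15 m n hm hn _ (by omega)
        have e2 : xf15 m n (2*i+1) = i*(2*m+1)+(m+1) := xf_odd_lt15 m n hm hn _ (by omega)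
        have e3 := xf_le_P15 m n (2*i+1)
        exact ⟨xf15 m n (2*i), xf15 m n (2*i+1),
          mem_A15 m n _ (by omega), mem_A15 m n _ (by omega),
          by omega, by omega, by omega, by omega, by omega⟩
      · rcases eq_or_lt_of_le (show m+1 ≤ r from hrm) with hrm1 | hrm2
        · -- r = m+1 : member j = 2i+1
          left
          have e2 : xf15 m n (2*i+1) = i*(2*m+1)+(m+1) := xf_odd_lt15 m n hm hn _ (by omega)
          exact ⟨2*i+1, by omega, by omega, by omega⟩
        · -- m+2 ≤ r : between xf(2i+1) and xf(2i+2)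
          right
          have e2 : xf15 m n (2*i+1) = i*(2*m+1)+(m+1) := xf_odd_lt15 m n hm hn _ (by omega)
          have e4 : xf15 m n (2*(i+1)) = (i+1)*(2*m+1) := xf_even15 m n hm hn _ (by omega)
          exact ⟨xf15 m n (2*i+1), xf15 m n (2*(i+1)),
            mem_A15 m n _ (by omega), mem_A15 m n _ (by omega),
            by omega, by omega, by omega, by omega, by omega⟩

lemma two_mem15 (m n : ℕ) (hn0 : 0 < n) (v : ZMod (2*n+1)) (a b : ℕ)
    (ha : a ≤ 2*n) (hb : b ≤ 2*n) (hab : a ≠ b)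
    (hSa : a ∈ A15 m n ∪ B15 m n) (hSb : b ∈ A15 m n ∪ B15 m n)
    (hAa : (HararyOddOdd m n).Adj v (a : ZMod (2*n+1)))
    (hAb : (HararyOddOdd m n).Adj v (b : ZMod (2*n+1))) :
    1 < ((HararyOddOdd m n).neighborSet v ∩ (↑(S15 m n) : Set (ZMod (2*n+1)))).ncard := by
  have fin : ((HararyOddOdd m n).neighborSet v ∩ (↑(S15 m n) : Set (ZMod (2*n+1)))).Finite :=
    Set.toFinite _
  rw [Set.one_lt_ncard_iff fin]
  exact ⟨(a : ZMod (2*n+1)), (b : ZMod (2*n+1)),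
    ⟨hAa, mem_S15 m n a hSa⟩, ⟨hAb, mem_S15 m n b hSb⟩,
    castne15 n (by omega) (by omega) hab⟩

lemma dom15 (m n : ℕ) (hm : 1 ≤ m) (hn : m+1 ≤ n) (w : ℕ) (hw : w ≤ 2*n) :
    1 < ((HararyOddOdd m n).neighborSet ((w : ℕ) : ZMod (2*n+1)) ∩
      (↑(S15 m n) : Set (ZMod (2*n+1)))).ncard := by
  obtain ⟨hb1, hb2, hb3, hb4⟩ := base15 m n hm hn
  have hE : E15 m n < m := hb3
  have hPdef : P15 m n = n - E15 m n := rfl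
  have hEn : E15 m n ≤ n := by omega
  have hPE : P15 m n + E15 m n = n := by omega
  have hPl : P15 m n ≤ n := by omega
  have hPg : 2 ≤ P15 m n := by omega
  have hmn : m < n := by omega
  have hn1 : 1 ≤ n := by omega
  have hA0 : (0:ℕ) ∈ A15 m n := by
    have h := mem_A15 m n 0 (Nat.zero_le _)
    rwa [xf0_15] at h
  have hAP : P15 m n ∈ A15 m n := by
    have h := mem_A15 m n (L15 m n) le_rfl
    rwa [xf_L15 m n hm hn] at h
  by_cases hw0 : w = 0
  · subst hw0
    refine two_mem15 m n (by omega) _ (0 + n) (P15 m n + n) (by omega) (by omega) (by omega)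
      (Finset.mem_union_right _ (mem_B15 m n 0 hA0))
      (Finset.mem_union_right _ (mem_B15 m n _ hAP)) ?_ ?_
    · exact adj_diag15 m n hn1 0 (Nat.zero_le _)
    · exact adj_nat15 m n hmn 0 (P15 m n + n) (E15 m n + 1) (by omega) (by omega)
        (by omega) (by omega) (by omega)
  by_cases hwn : w = n
  · rw [hwn]
    have ha : (HararyOddOdd m n).Adj ((n:ℕ) : ZMod (2*n+1)) (((0:ℕ) : ZMod (2*n+1))) := by
      have h := (adj_diag15 m n hn1 0 (Nat.zero_le _)).symm
      rwa [show (0 + n : ℕ) = n from by omega] at h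
    by_cases hE0 : E15 m n = 0
    · refine two_mem15 m n (by omega) _ 0 (P15 m n + n) (by omega) (by omega) (by omega)
        (Finset.mem_union_left _ hA0)
        (Finset.mem_union_right _ (mem_B15 m n _ hAP)) ha ?_
      have h := adj_diag15 m n hn1 n le_rfl
      rwa [show (n + n : ℕ) = P15 m n + n from by omega] at h
    · refine two_mem15 m n (by omega) _ 0 (P15 m n) (by omega) (by omega) (by omega)
        (Finset.mem_union_left _ hA0) (Finset.mem_union_left _ hAP) ha ?_
      exact adj_nat15 m n hmn n (P15 m n) (E15 m n) (by omega) (by omega)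
        (by omega) (by omega) (by omega)
  by_cases hwP : w = P15 m n
  · subst hwP
    have hE1 : 1 ≤ E15 m n := by omega
    refine two_mem15 m n (by omega) _ (P15 m n + n) (0 + n) (by omega) (by omega) (by omega)
      (Finset.mem_union_right _ (mem_B15 m n _ hAP))
      (Finset.mem_union_right _ (mem_B15 m n 0 hA0)) ?_ ?_
    · exact adj_diag15 m n hn1 (P15 m n) hPl
    · exact adj_nat15 m n hmn (P15 m n) (0 + n) (E15 m n) (by omega) (by omega)
        (by omega) (by omega) (by omega)
  by_cases hwD : w = P15 m n + n
  · subst hwD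
    refine two_mem15 m n (by omega) _ (P15 m n) 0 (by omega) (by omega) (by omega)
      (Finset.mem_union_left _ hAP) (Finset.mem_union_left _ hA0) ?_ ?_
    · exact (adj_diag15 m n hn1 (P15 m n) hPl).symm
    · exact adj_nat15 m n hmn (P15 m n + n) 0 (E15 m n + 1) (by omega) (by omega)
        (by omega) (by omega) (by omega)
  by_cases h5 : 0 < w ∧ w < P15 m n
  · rcases position15 m n hm hn w h5.1 h5.2 with ⟨j, hj1, hjL, hwj⟩ | ⟨a, b, haA, hbA, k1, k2, k3, k4, k5⟩
    · obtain ⟨b, hbA, hbP, hbd⟩ := member_circ15 m n hm hn j hj1 hjL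
      have hwA : w ∈ A15 m n := by rw [hwj]; exact mem_A15 m n j (by omega)
      refine two_mem15 m n (by omega) _ (w + n) b (by omega) (by omega) (by omega)
        (Finset.mem_union_right _ (mem_B15 m n w hwA)) (Finset.mem_union_left _ hbA) ?_ ?_
      · exact adj_diag15 m n hn1 w (by omega)
      · exact adj_nat15 m n hmn w b m (by omega) (by omega) (by omega) le_rfl (by omega)
    · refine two_mem15 m n (by omega) _ a b (by omega) (by omega) (by omega)
        (Finset.mem_union_left _ haA) (Finset.mem_union_left _ hbA) ?_ ?_
      · exact adj_nat15 m n hmn w a (w - a) (by omega) (by omega) (by omega) (by omega) (by omega)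
      · exact adj_nat15 m n hmn w b (b - w) (by omega) (by omega) (by omega) (by omega) (by omega)
  by_cases h6 : P15 m n < w ∧ w < n
  · refine two_mem15 m n (by omega) _ (P15 m n) (0 + n) (by omega) (by omega) (by omega)
      (Finset.mem_union_left _ hAP) (Finset.mem_union_right _ (mem_B15 m n 0 hA0)) ?_ ?_
    · exact adj_nat15 m n hmn w (P15 m n) (w - P15 m n) (by omega) (by omega)
        (by omega) (by omega) (by omega)
    · exact adj_nat15 m n hmn w (0 + n) (n - w) (by omega) (by omega)
        (by omega) (by omega) (by omega)
  by_cases h7 : n < w ∧ w < P15 m n + n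
  · rcases position15 m n hm hn (w - n) (by omega) (by omega) with
      ⟨j, hj1, hjL, hwj⟩ | ⟨a, b, haA, hbA, k1, k2, k3, k4, k5⟩
    · obtain ⟨b, hbA, hbP, hbd⟩ := member_circ15 m n hm hn j hj1 hjL
      have hwA : w - n ∈ A15 m n := by rw [hwj]; exact mem_A15 m n j (by omega)
      refine two_mem15 m n (by omega) _ (w - n) (b + n) (by omega) (by omega) (by omega)
        (Finset.mem_union_left _ hwA) (Finset.mem_union_right _ (mem_B15 m n b hbA)) ?_ ?_
      · have h := (adj_diag15 m n hn1 (w - n) (by omega)).symm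
        rwa [show (w - n + n : ℕ) = w from by omega] at h
      · exact adj_nat15 m n hmn w (b + n) m (by omega) (by omega) (by omega) le_rfl (by omega)
    · refine two_mem15 m n (by omega) _ (a + n) (b + n) (by omega) (by omega) (by omega)
        (Finset.mem_union_right _ (mem_B15 m n a haA))
        (Finset.mem_union_right _ (mem_B15 m n b hbA)) ?_ ?_
      · exact adj_nat15 m n hmn w (a + n) (w - (a + n)) (by omega) (by omega)
          (by omega) (by omega) (by omega)
      · exact adj_nat15 m n hmn w (b + n) (b + n - w) (by omega) (by omega)
          (by omega) (by omega) (by omega)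
  -- remaining: P + n < w ≤ 2n
  · have hreg : P15 m n + n < w := by omega
    have hE1 : 1 ≤ E15 m n := by omega
    refine two_mem15 m n (by omega) _ (P15 m n + n) 0 (by omega) (by omega) (by omega)
      (Finset.mem_union_right _ (mem_B15 m n _ hAP)) (Finset.mem_union_left _ hA0) ?_ ?_
    · exact adj_nat15 m n hmn w (P15 m n + n) (w - (P15 m n + n)) (by omega) (by omega)
        (by omega) (by omega) (by omega)
    · exact adj_nat15 m n hmn w 0 (2*n+1 - w) (by omega) (by omega)
        (by omega) (by omega) (by omega)

lemma ceil_ge15 (m n t : ℕ) (h : t*(2*m+1) < 4*n+1) :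
    t < ⌈(4 * n + 1 : ℚ) / (2 * m + 1 : ℚ)⌉₊ := by
  rw [Nat.lt_ceil, lt_div_iff₀ (by positivity)]
  exact_mod_cast h

lemma card_S15 (m n : ℕ) (hm : 1 ≤ m) (hn : m+1 ≤ n) :
    (S15 m n).card ≤ ⌈(4 * n + 1 : ℚ) / (2 * m + 1 : ℚ)⌉₊ + 1 := by
  obtain ⟨hb1, hb2, hb3, hb4⟩ := base15 m n hm hn
  have hc1 : (S15 m n).card ≤ (A15 m n ∪ B15 m n).card := Finset.card_image_le
  have hcA : (A15 m n).card ≤ L15 m n + 1 :=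
    le_trans Finset.card_image_le (le_of_eq (Finset.card_range _))
  have hcB : (B15 m n).card ≤ L15 m n + 1 := le_trans Finset.card_image_le hcA
  rcases hb4 with ⟨hc,hE,hL,hp⟩|⟨hc,hE,hL,hp⟩|⟨hc,hE,hL,hp⟩|⟨hc,hE,hL,hp⟩
  · -- c < m : trivial count 2L+2 = 4u+2, ceil ≥ 4u+1
    have hT : 4*u15 m n < ⌈(4 * n + 1 : ℚ) / (2 * m + 1 : ℚ)⌉₊ := by
      apply ceil_ge15
      have hx : (4*u15 m n)*(2*m+1) = 4*(u15 m n*(2*m+1)) := by ring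
      omega
    have := le_trans hc1 (le_trans (Finset.card_union_le _ _) (by omega : (A15 m n).card + (B15 m n).card ≤ 4*u15 m n + 2))
    omega
  -- cases c = m and c = m+1 : overlap count 2L+1 = 4u+3, ceil ≥ 4u+2
  pick_goal 3
  · -- c ≥ m+2 : trivial count 2L+2 = 4u+4, ceil ≥ 4u+3
    have hT : 4*u15 m n + 2 < ⌈(4 * n + 1 : ℚ) / (2 * m + 1 : ℚ)⌉₊ := by
      apply ceil_ge15
      have hx : (4*u15 m n+2)*(2*m+1) = 4*(u15 m n*(2*m+1)) + 2*(2*m+1) := by ring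
      omega
    have := le_trans hc1 (le_trans (Finset.card_union_le _ _) (by omega : (A15 m n).card + (B15 m n).card ≤ 4*u15 m n + 4))
    omega
  all_goals {
    -- c = m or c = m+1 : E = 0, P = n, overlap at n
    have hPn : P15 m n = n := by
      have : P15 m n = n - E15 m n := rfl
      omega
    have hAn : n ∈ A15 m n := by
      have h := mem_A15 m n (L15 m n) le_rfl
      rw [xf_L15 m n hm hn, hPn] at h
      exact h
    have hBn : n ∈ B15 m n := by
      have h0 : (0:ℕ) ∈ A15 m n := by
        have h := mem_A15 m n 0 (Nat.zero_le _)
        rwa [xf0_15] at h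
      have h := mem_B15 m n 0 h0
      rwa [Nat.zero_add] at h
    have hsub : A15 m n ∪ B15 m n ⊆ A15 m n ∪ (B15 m n).erase n := by
      intro x hx
      rcases Finset.mem_union.1 hx with h | h
      · exact Finset.mem_union_left _ h
      · by_cases hxn : x = n
        · exact Finset.mem_union_left _ (hxn ▸ hAn)
        · exact Finset.mem_union_right _ (Finset.mem_erase.2 ⟨hxn, h⟩)
    have hce : ((B15 m n).erase n).card = (B15 m n).card - 1 := Finset.card_erase_of_mem hBn
    have hcBn : 1 ≤ (B15 m n).card := Finset.card_pos.2 ⟨n, hBn⟩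
    have hcount : (A15 m n ∪ B15 m n).card ≤ 4*u15 m n + 3 :=
      le_trans (Finset.card_le_card hsub)
        (le_trans (Finset.card_union_le _ _) (by omega))
    have hT : 4*u15 m n + 1 < ⌈(4 * n + 1 : ℚ) / (2 * m + 1 : ℚ)⌉₊ := by
      apply ceil_ge15
      have hx : (4*u15 m n+1)*(2*m+1) = 4*(u15 m n*(2*m+1)) + (2*m+1) := by ring
      omega
    omega
  }

theorem stmt_15 (m n : ℕ) (hm : 1 ≤ m) (hn : 2 * m + 2 ≤ 2 * n + 1) :
    kTupleTotalDomNum (HararyOddOdd m n) 2 ≤ ⌈(4 * n + 1 : ℚ) / (2 * m + 1 : ℚ)⌉₊ + 1 := by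
  have hn' : m + 1 ≤ n := by omega
  have hdom : IsKTupleTotalDomSet (HararyOddOdd m n) 2 (↑(S15 m n) : Set (ZMod (2*n+1))) := by
    intro v
    have hvv : ((v.val : ℕ) : ZMod (2*n+1)) = v := by
      rw [ZMod.natCast_val, ZMod.cast_id]
    have hwlt : v.val ≤ 2*n := by
      have := ZMod.val_lt v
      omega
    have h := dom15 m n hm hn' v.val hwlt
    rw [hvv] at h
    omega
  have h1 : kTupleTotalDomNum (HararyOddOdd m n) 2 ≤ (↑(S15 m n) : Set (ZMod (2*n+1))).ncard :=
    Nat.sInf_le ⟨(↑(S15 m n) : Set (ZMod (2*n+1))), hdom, rfl⟩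
  rw [Set.ncard_coe_finset] at h1
  exact le_trans h1 (card_S15 m n hm hn')
end

section
/- Write 2n+1 = (2m+1)ℓ + r with 0 ≤ r ≤ 2m and ℓ ≥ 1. If r = 1, then γ_{×2,t}(H_{2m+1,2n+1}) = ⌈(4n+1)/(2m+1)⌉ = 2ℓ+1. -/
namespace Stmt16Aux

open SimpleGraph Finset

lemma cast_eq_iff {n a b : ℕ} (ha : a < 2*n+1) (hb : b < 2*n+1) :
    ((a : ZMod (2*n+1)) = (b : ZMod (2*n+1))) ↔ a = b := by
  constructor
  · intro h
    have h1 := ZMod.val_cast_of_lt ha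
    have h2 := ZMod.val_cast_of_lt hb
    rw [← h1, ← h2, h]
  · rintro rfl; rfl

lemma cast_wrap {n : ℕ} (p : ℕ) : ((2*n+1 + p : ℕ) : ZMod (2*n+1)) = (p : ZMod (2*n+1)) := by
  rw [Nat.cast_add, ZMod.natCast_self, zero_add]

lemma adj_circ {m n : ℕ} (hmn : m ≤ n) {a d : ℕ} (hd1 : 1 ≤ d) (hdm : d ≤ m) :
    (HararyOddOdd m n).Adj (a : ZMod (2*n+1)) ((a + d : ℕ) : ZMod (2*n+1)) := by
  rw [HararyOddOdd, SimpleGraph.fromRel_adj]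
  refine ⟨?_, Or.inl (Or.inl ⟨d, hd1, hdm, by push_cast; ring⟩)⟩
  intro h
  have hd0 : ((d : ℕ) : ZMod (2*n+1)) = 0 := by
    have h2 : (a : ZMod (2*n+1)) + (d : ZMod (2*n+1)) = (a : ZMod (2*n+1)) + 0 := by
      push_cast at h
      rw [← h]; ring
    exact add_left_cancel h2
  rw [ZMod.natCast_eq_zero_iff] at hd0
  have := Nat.le_of_dvd (by omega) hd0
  omega

lemma adj_diag {m n : ℕ} (hn : 1 ≤ n) {i₀ : ℕ} (h : i₀ ≤ n) :
    (HararyOddOdd m n).Adj (i₀ : ZMod (2*n+1)) ((i₀ + n : ℕ) : ZMod (2*n+1)) := by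
  rw [HararyOddOdd, SimpleGraph.fromRel_adj]
  refine ⟨?_, Or.inl (Or.inr ⟨i₀, h, rfl, rfl⟩)⟩
  intro hc
  have hd0 : ((n : ℕ) : ZMod (2*n+1)) = 0 := by
    have h2 : (i₀ : ZMod (2*n+1)) + (n : ZMod (2*n+1)) = (i₀ : ZMod (2*n+1)) + 0 := by
      push_cast at hc
      rw [← hc]; ring
    exact add_left_cancel h2
  rw [ZMod.natCast_eq_zero_iff] at hd0
  have := Nat.le_of_dvd (by omega) hd0
  omega

/-- Adjacency where the target vertex is given as a natural `p` with
`a + d = p` or wrapping around. -/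
lemma adj_up {m n : ℕ} (hmn : m ≤ n) {a p d : ℕ} (hd1 : 1 ≤ d) (hdm : d ≤ m)
    (h : a + d = p ∨ a + d = 2*n+1 + p) :
    (HararyOddOdd m n).Adj (a : ZMod (2*n+1)) (p : ZMod (2*n+1)) := by
  have h0 := adj_circ (m := m) (n := n) hmn hd1 hdm (a := a)
  rcases h with h | h
  · rwa [h] at h0
  · rwa [h, cast_wrap] at h0

lemma adj_down {m n : ℕ} (hmn : m ≤ n) {a p d : ℕ} (hd1 : 1 ≤ d) (hdm : d ≤ m)
    (h : p + d = a) :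
    (HararyOddOdd m n).Adj (a : ZMod (2*n+1)) (p : ZMod (2*n+1)) := by
  have h0 := adj_circ (m := m) (n := n) hmn hd1 hdm (a := p)
  rw [h] at h0
  exact h0.symm

lemma adj_diag_up {m n : ℕ} (hn : 1 ≤ n) {a p : ℕ} (ha : a ≤ n) (h : a + n = p) :
    (HararyOddOdd m n).Adj (a : ZMod (2*n+1)) (p : ZMod (2*n+1)) := by
  have h0 := adj_diag (m := m) hn ha
  rwa [h] at h0

lemma adj_diag_down {m n : ℕ} (hn : 1 ≤ n) {a p : ℕ} (hp : p ≤ n) (h : p + n = a) :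
    (HararyOddOdd m n).Adj (a : ZMod (2*n+1)) (p : ZMod (2*n+1)) := by
  have h0 := adj_diag (m := m) hn hp
  rw [h] at h0
  exact h0.symm

lemma ne_01 {D k₁ k₂ : ℕ} (hD : 2 ≤ D) : D*k₁ ≠ D*k₂+1 := by
  intro h
  have h1 : (D*k₁) % D = 0 := Nat.mul_mod_right _ _
  have h2 : (D*k₂+1) % D = 1 % D := Nat.mul_add_mod _ _ _
  have h3 : 1 % D = 1 := Nat.mod_eq_of_lt (by omega)
  rw [h] at h1
  omega

/-- The dominating set: block starts `(2m+1)k` for `k ≤ ℓ` and block seconds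
`(2m+1)k+1` for `k < ℓ`, as elements of `ZMod (2n+1)`. -/
def hF (m n ℓ : ℕ) : Finset (ZMod (2*n+1)) :=
  ((Finset.Iic ℓ).image fun k => (((2*m+1)*k : ℕ) : ZMod (2*n+1))) ∪
  ((Finset.Iio ℓ).image fun k => (((2*m+1)*k+1 : ℕ) : ZMod (2*n+1)))

lemma mem_hF_mul {m n ℓ k : ℕ} (hk : k ≤ ℓ) :
    (((2*m+1)*k : ℕ) : ZMod (2*n+1)) ∈ hF m n ℓ :=
  Finset.mem_union_left _ (Finset.mem_image.2 ⟨k, Finset.mem_Iic.2 hk, rfl⟩)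

lemma mem_hF_mul1 {m n ℓ k : ℕ} (hk : k < ℓ) :
    (((2*m+1)*k+1 : ℕ) : ZMod (2*n+1)) ∈ hF m n ℓ :=
  Finset.mem_union_right _ (Finset.mem_image.2 ⟨k, Finset.mem_Iio.2 hk, rfl⟩)

lemma hF_card {m n ℓ : ℕ} (hm : 1 ≤ m) (h2n : 2*n = (2*m+1)*ℓ) :
    (hF m n ℓ).card = 2*ℓ+1 := by
  have hDpos : 0 < 2*m+1 := by omega
  have hb : ∀ k : ℕ, k ≤ ℓ → (2*m+1)*k < 2*n+1 := by
    intro k hk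
    have := Nat.mul_le_mul_left (2*m+1) hk
    omega
  have hb1 : ∀ k : ℕ, k < ℓ → (2*m+1)*k+1 < 2*n+1 := by
    intro k hk
    have := Nat.mul_le_mul_left (2*m+1) hk
    have e : (2*m+1)*ℓ = (2*m+1)*k + (2*m+1)*(ℓ - k) := by
      rw [← Nat.mul_add]
      congr 1
      omega
    have h2 : 1*1 ≤ (2*m+1)*(ℓ-k) := Nat.mul_le_mul (by omega) (by omega)
    omega
  rw [hF, Finset.card_union_of_disjoint, Finset.card_image_of_injOn,
    Finset.card_image_of_injOn]
  · simp [Nat.card_Iic, Nat.card_Iio]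
    omega
  · intro k₁ hk₁ k₂ hk₂ h
    simp only [Finset.coe_Iio, Set.mem_Iio] at hk₁ hk₂
    have := (cast_eq_iff (hb1 k₁ hk₁) (hb1 k₂ hk₂)).1 h
    have : (2*m+1)*k₁ = (2*m+1)*k₂ := by omega
    exact Nat.eq_of_mul_eq_mul_left hDpos this
  · intro k₁ hk₁ k₂ hk₂ h
    simp only [Finset.coe_Iic, Set.mem_Iic] at hk₁ hk₂
    have := (cast_eq_iff (hb k₁ hk₁) (hb k₂ hk₂)).1 h
    exact Nat.eq_of_mul_eq_mul_left hDpos this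
  · rw [Finset.disjoint_left]
    rintro x hx hx'
    rw [Finset.mem_image] at hx hx'
    obtain ⟨k₁, hk₁, rfl⟩ := hx
    obtain ⟨k₂, hk₂, h⟩ := hx'
    rw [Finset.mem_Iic] at hk₁
    rw [Finset.mem_Iio] at hk₂
    have := (cast_eq_iff (hb1 k₂ hk₂) (hb k₁ hk₁)).1 h
    exact ne_01 (by omega) this.symm


lemma bound0 {m n ℓ k : ℕ} (h2n : 2*n = (2*m+1)*ℓ) (hk : k ≤ ℓ) : (2*m+1)*k < 2*n+1 := by
  have := Nat.mul_le_mul_left (2*m+1) hk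
  omega

lemma bound1 {m n ℓ k : ℕ} (h2n : 2*n = (2*m+1)*ℓ) (hk : k < ℓ) : (2*m+1)*k+1 < 2*n+1 := by
  have := Nat.mul_le_mul_left (2*m+1) hk
  have e : (2*m+1)*ℓ = (2*m+1)*k + (2*m+1)*(ℓ - k) := by
    rw [← Nat.mul_add]; congr 1; omega
  have h2 : 1*1 ≤ (2*m+1)*(ℓ-k) := Nat.mul_le_mul (by omega) (by omega)
  omega

lemma hF_dom {m n t : ℕ} (hm : 1 ≤ m) (ht : 1 ≤ t) (hn : n = (2*m+1)*t) :
    IsKTupleTotalDomSet (HararyOddOdd m n) 2 ↑(hF m n (2*t)) := by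
  intro v
  haveI : NeZero (2*n+1) := ⟨by omega⟩
  have hmn : m ≤ n := by
    have := Nat.mul_le_mul_left (2*m+1) ht
    omega
  have hnpos : 1 ≤ n := by omega
  set ℓ := 2*t with hℓ
  have h2n : 2*n = (2*m+1)*ℓ := by rw [hn, hℓ]; ring
  obtain ⟨a, hva, haN⟩ : ∃ a : ℕ, ((a : ZMod (2*n+1)) = v) ∧ a < 2*n+1 :=
    ⟨v.val, ZMod.natCast_rightInverse v, ZMod.val_lt v⟩
  subst hva
  have key : ∀ p₁ p₂ : ℕ, p₁ < 2*n+1 → p₂ < 2*n+1 → p₁ ≠ p₂ →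
      ((p₁ : ZMod (2*n+1)) ∈ hF m n ℓ) → ((p₂ : ZMod (2*n+1)) ∈ hF m n ℓ) →
      (HararyOddOdd m n).Adj (a : ZMod (2*n+1)) (p₁ : ZMod (2*n+1)) →
      (HararyOddOdd m n).Adj (a : ZMod (2*n+1)) (p₂ : ZMod (2*n+1)) →
      2 ≤ ((HararyOddOdd m n).neighborSet ((a : ℕ) : ZMod (2*n+1)) ∩ ↑(hF m n ℓ)).ncard := by
    intro p₁ p₂ hb1 hb2 hnep hmem1 hmem2 hA1 hA2
    have hne' : (p₁ : ZMod (2*n+1)) ≠ (p₂ : ZMod (2*n+1)) :=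
      fun h => hnep ((cast_eq_iff hb1 hb2).1 h)
    have hsub : ({(p₁ : ZMod (2*n+1)), (p₂ : ZMod (2*n+1))} : Set (ZMod (2*n+1))) ⊆
        (HararyOddOdd m n).neighborSet ((a : ℕ) : ZMod (2*n+1)) ∩ ↑(hF m n ℓ) := by
      rintro x (rfl | rfl)
      · exact Set.mem_inter hA1 (Finset.mem_coe.2 hmem1)
      · exact Set.mem_inter hA2 (Finset.mem_coe.2 hmem2)
    have h2 := Set.ncard_le_ncard hsub (Set.toFinite _)
    rwa [Set.ncard_pair hne'] at h2
  obtain ⟨q, s, hqs, hsD⟩ : ∃ q s, a = (2*m+1)*q + s ∧ s < 2*m+1 :=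
    ⟨a/(2*m+1), a%(2*m+1), (Nat.div_add_mod a (2*m+1)).symm, Nat.mod_lt a (by omega)⟩
  have hqℓ : q ≤ ℓ := Nat.le_of_mul_le_mul_left (show (2*m+1)*q ≤ (2*m+1)*ℓ by omega) (by omega)
  have hq1 : 1 ≤ s → q < ℓ := fun h1 => Nat.lt_of_mul_lt_mul_left (a := 2*m+1) (show (2*m+1)*q < (2*m+1)*ℓ by omega)
  have e0 : (2*m+1)*0 = 0 := by ring
  have eq1 : (2*m+1)*(q+1) = (2*m+1)*q + (2*m+1) := by ring
  have eqt : (2*m+1)*(q+t) = (2*m+1)*q + (2*m+1)*t := by ring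
  by_cases hs0 : s = 0
  · -- a = (2m+1)q
    by_cases hqt : q ≤ t
    · -- p₁ = Dq+1, p₂ = D(q+t), diagonal up
      have hql : q < ℓ := by omega
      refine key ((2*m+1)*q+1) ((2*m+1)*(q+t)) (bound1 h2n hql) (bound0 h2n (by omega))
        (Ne.symm (ne_01 (by omega))) (mem_hF_mul1 hql) (mem_hF_mul (by omega)) ?_ ?_
      · exact adj_up hmn le_rfl hm (Or.inl (by omega))
      · refine adj_diag_up hnpos ?_ ?_
        · have := Nat.mul_le_mul_left (2*m+1) hqt
          omega
        · omega
    · -- q > t : p₂ = D u with q = u + t, diagonal down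
      obtain ⟨u, hu⟩ : ∃ u, q = u + t := ⟨q - t, by omega⟩
      have equ : (2*m+1)*q = (2*m+1)*u + (2*m+1)*t := by rw [hu]; ring
      have hadj2 : (HararyOddOdd m n).Adj (a : ZMod (2*n+1)) (((2*m+1)*u : ℕ) : ZMod (2*n+1)) := by
        refine adj_diag_down hnpos ?_ (by omega)
        have := Nat.mul_le_mul_left (2*m+1) (show u ≤ t by omega)
        omega
      by_cases hql : q < ℓ
      · refine key ((2*m+1)*q+1) ((2*m+1)*u) (bound1 h2n hql) (bound0 h2n (by omega))
          (Ne.symm (ne_01 (by omega))) (mem_hF_mul1 hql) (mem_hF_mul (by omega)) ?_ hadj2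
        exact adj_up hmn le_rfl hm (Or.inl (by omega))
      · -- q = ℓ, a = 2n ; p₁ = 0 (wrap)
        have hqe : q = ℓ := by omega
        have hu1 : 1*1 ≤ (2*m+1)*u := Nat.mul_le_mul (by omega) (by omega)
        refine key ((2*m+1)*0) ((2*m+1)*u) (by omega) (bound0 h2n (by omega))
          (by omega) (mem_hF_mul (by omega)) (mem_hF_mul (by omega)) ?_ hadj2
        refine adj_up hmn le_rfl hm (Or.inr ?_)
        have : (2*m+1)*q = (2*m+1)*ℓ := by rw [hqe]
        omega
  · by_cases hs1 : s = 1
    · -- p₁ = Dq (down), p₂ diagonal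
      have hql : q < ℓ := hq1 (by omega)
      have hadj1 : (HararyOddOdd m n).Adj (a : ZMod (2*n+1)) (((2*m+1)*q : ℕ) : ZMod (2*n+1)) :=
        adj_down hmn le_rfl hm (by omega)
      by_cases hqt : q < t
      · have hql2 : q + t < ℓ := by omega
        refine key ((2*m+1)*q) ((2*m+1)*(q+t)+1) (bound0 h2n (by omega)) (bound1 h2n hql2)
          (ne_01 (by omega)) (mem_hF_mul (by omega)) (mem_hF_mul1 hql2) hadj1 ?_
        refine adj_diag_up hnpos ?_ (by omega)
        have := Nat.mul_le_mul_left (2*m+1) (show q+1 ≤ t by omega)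
        omega
      · obtain ⟨u, hu⟩ : ∃ u, q = u + t := ⟨q - t, by omega⟩
        have hut : u < t := by omega
        have equ : (2*m+1)*q = (2*m+1)*u + (2*m+1)*t := by rw [hu]; ring
        refine key ((2*m+1)*q) ((2*m+1)*u+1) (bound0 h2n (by omega)) (bound1 h2n (by omega))
          (ne_01 (by omega)) (mem_hF_mul (by omega)) (mem_hF_mul1 (by omega)) hadj1 ?_
        refine adj_diag_down hnpos ?_ (by omega)
        have := Nat.mul_le_mul_left (2*m+1) (show u+1 ≤ t by omega)
        have : (2*m+1)*(u+1) = (2*m+1)*u + (2*m+1) := by ring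
        omega
    · by_cases hsm : s ≤ m
      · -- 2 ≤ s ≤ m : p₁ = Dq, p₂ = Dq+1
        have hs2 : 2 ≤ s := by omega
        have hql : q < ℓ := hq1 (by omega)
        obtain ⟨d, hd⟩ : ∃ d, s = d + 1 := ⟨s - 1, by omega⟩
        refine key ((2*m+1)*q) ((2*m+1)*q+1) (bound0 h2n (by omega)) (bound1 h2n hql)
          (ne_01 (by omega)) (mem_hF_mul (by omega)) (mem_hF_mul1 hql) ?_ ?_
        · exact adj_down hmn (show 1 ≤ s by omega) hsm (by omega)
        · exact adj_down hmn (show 1 ≤ d by omega) (show d ≤ m by omega) (by omega)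
      · by_cases hsm1 : s = m+1
        · -- p₁ = Dq+1 (down, d=m), p₂ = D(q+1) (up, d=m)
          have hql : q < ℓ := hq1 (by omega)
          refine key ((2*m+1)*q+1) ((2*m+1)*(q+1)) (bound1 h2n hql) (bound0 h2n (by omega))
            (Ne.symm (ne_01 (by omega))) (mem_hF_mul1 hql) (mem_hF_mul (by omega)) ?_ ?_
          · exact adj_down hmn hm le_rfl (by omega)
          · exact adj_up hmn hm le_rfl (Or.inl (by omega))
        · -- m+2 ≤ s ≤ 2m
          have hs2 : m+2 ≤ s := by omega
          have hql : q < ℓ := hq1 (by omega)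
          obtain ⟨d, hd⟩ : ∃ d, s + d = 2*m+1 := ⟨2*m+1-s, by omega⟩
          have hd1 : 1 ≤ d := by omega
          have hdm : d + 1 ≤ m := by omega
          have hadj1 : (HararyOddOdd m n).Adj (a : ZMod (2*n+1))
              (((2*m+1)*(q+1) : ℕ) : ZMod (2*n+1)) :=
            adj_up hmn hd1 (by omega) (Or.inl (by omega))
          by_cases hql2 : q + 1 < ℓ
          · have eq2 : (2*m+1)*(q+2) = (2*m+1)*(q+1) + (2*m+1) := by ring
            refine key ((2*m+1)*(q+1)) ((2*m+1)*(q+1)+1) (bound0 h2n (by omega))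
              (bound1 h2n hql2) (ne_01 (by omega)) (mem_hF_mul (by omega))
              (mem_hF_mul1 hql2) hadj1 ?_
            exact adj_up hmn (show 1 ≤ d+1 by omega) hdm (Or.inl (by omega))
          · -- q+1 = ℓ : p₂ = 0 via wrap
            have hqe : q + 1 = ℓ := by omega
            have : (2*m+1)*(q+1) = (2*m+1)*ℓ := by rw [hqe]
            refine key ((2*m+1)*(q+1)) ((2*m+1)*0) (bound0 h2n (by omega)) (by omega)
              (by omega) (mem_hF_mul (by omega)) (mem_hF_mul (by omega)) hadj1 ?_
            exact adj_up hmn (show 1 ≤ d+1 by omega) hdm (Or.inr (by omega))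

lemma icc_ncard (m : ℕ) : (Set.Icc 1 m).ncard = m := by
  rw [← Finset.coe_Icc, Set.ncard_coe_finset, Nat.card_Icc]
  omega

lemma nbr_subset_gen {m n : ℕ} (v : ZMod (2*n+1)) :
    (HararyOddOdd m n).neighborSet v ⊆
      (fun d : ℕ => v + (d : ZMod (2*n+1))) '' Set.Icc 1 m ∪
      (fun d : ℕ => v - (d : ZMod (2*n+1))) '' Set.Icc 1 m ∪
      {v + ((n:ℕ) : ZMod (2*n+1)), v - ((n:ℕ) : ZMod (2*n+1))} := by
  intro w hw
  rw [SimpleGraph.mem_neighborSet, HararyOddOdd, SimpleGraph.fromRel_adj] at hw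
  obtain ⟨hne, h | h⟩ := hw
  · rcases h with ⟨d, hd1, hdm, rfl⟩ | ⟨i₀, hi, rfl, rfl⟩
    · exact Or.inl (Or.inl ⟨d, ⟨hd1, hdm⟩, rfl⟩)
    · refine Or.inr (Or.inl ?_)
      push_cast
      rfl
  · rcases h with ⟨d, hd1, hdm, hv⟩ | ⟨i₀, hi, rfl, hv⟩
    · refine Or.inl (Or.inr ⟨d, ⟨hd1, hdm⟩, ?_⟩)
      rw [hv]; ring
    · refine Or.inr (Or.inr ?_)
      rw [Set.mem_singleton_iff, hv]
      push_cast
      ring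

lemma deg_le_all {m n : ℕ} (hn : 1 ≤ n) (v : ZMod (2*n+1)) :
    ((HararyOddOdd m n).neighborSet v).ncard ≤ 2*m+2 := by
  haveI : NeZero (2*n+1) := ⟨by omega⟩
  have h := Set.ncard_le_ncard (nbr_subset_gen (m := m) v) (Set.toFinite _)
  refine h.trans ?_
  refine (Set.ncard_union_le _ _).trans ?_
  have h1 : ((fun d : ℕ => v + (d : ZMod (2*n+1))) '' Set.Icc 1 m).ncard ≤ m :=
    le_trans (Set.ncard_image_le (Set.toFinite _)) (le_of_eq (icc_ncard m))
  have h2 : ((fun d : ℕ => v - (d : ZMod (2*n+1))) '' Set.Icc 1 m).ncard ≤ m :=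
    le_trans (Set.ncard_image_le (Set.toFinite _)) (le_of_eq (icc_ncard m))
  have h3 : ({v + ((n:ℕ) : ZMod (2*n+1)), v - ((n:ℕ) : ZMod (2*n+1))} : Set (ZMod (2*n+1))).ncard ≤ 2 :=
    (Set.ncard_insert_le _ _).trans (by simp)
  have h4 := Set.ncard_union_le ((fun d : ℕ => v + (d : ZMod (2*n+1))) '' Set.Icc 1 m)
    ((fun d : ℕ => v - (d : ZMod (2*n+1))) '' Set.Icc 1 m)
  omega

lemma deg_le {m n : ℕ} (hn : 1 ≤ n) (v : ZMod (2*n+1)) (hv : v ≠ ((n:ℕ) : ZMod (2*n+1))) :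
    ((HararyOddOdd m n).neighborSet v).ncard ≤ 2*m+1 := by
  haveI : NeZero (2*n+1) := ⟨by omega⟩
  have hsub : (HararyOddOdd m n).neighborSet v ⊆
      (fun d : ℕ => v + (d : ZMod (2*n+1))) '' Set.Icc 1 m ∪
      (fun d : ℕ => v - (d : ZMod (2*n+1))) '' Set.Icc 1 m ∪
      {if v.val ≤ n then v + ((n:ℕ) : ZMod (2*n+1)) else v - ((n:ℕ) : ZMod (2*n+1))} := by
    intro w hw
    rw [SimpleGraph.mem_neighborSet, HararyOddOdd, SimpleGraph.fromRel_adj] at hw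
    obtain ⟨hne, h | h⟩ := hw
    · rcases h with ⟨d, hd1, hdm, rfl⟩ | ⟨i₀, hi, hveq, rfl⟩
      · exact Or.inl (Or.inl ⟨d, ⟨hd1, hdm⟩, rfl⟩)
      · refine Or.inr ?_
        rw [Set.mem_singleton_iff]
        have hval : v.val ≤ n := by
          rw [hveq, ZMod.val_cast_of_lt (by omega)]; exact hi
        rw [if_pos hval, hveq]
        push_cast
        rfl
    · rcases h with ⟨d, hd1, hdm, hveq⟩ | ⟨i₀, hi, rfl, hveq⟩
      · refine Or.inl (Or.inr ⟨d, ⟨hd1, hdm⟩, ?_⟩)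
        rw [hveq]; ring
      · refine Or.inr ?_
        rw [Set.mem_singleton_iff]
        have hi1 : 1 ≤ i₀ := by
          rcases Nat.eq_zero_or_pos i₀ with h0 | h0
          · exfalso; apply hv; rw [hveq, h0]; norm_num
          · exact h0
        have hval : ¬ v.val ≤ n := by
          rw [hveq, ZMod.val_cast_of_lt (by omega)]; omega
        rw [if_neg hval, hveq]
        push_cast
        ring
  have h := Set.ncard_le_ncard hsub (Set.toFinite _)
  refine h.trans ?_
  refine (Set.ncard_union_le _ _).trans ?_
  have h1 : ((fun d : ℕ => v + (d : ZMod (2*n+1))) '' Set.Icc 1 m).ncard ≤ m :=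
    le_trans (Set.ncard_image_le (Set.toFinite _)) (le_of_eq (icc_ncard m))
  have h2 : ((fun d : ℕ => v - (d : ZMod (2*n+1))) '' Set.Icc 1 m).ncard ≤ m :=
    le_trans (Set.ncard_image_le (Set.toFinite _)) (le_of_eq (icc_ncard m))
  have h3 : ({if v.val ≤ n then v + ((n:ℕ) : ZMod (2*n+1)) else v - ((n:ℕ) : ZMod (2*n+1))} : Set (ZMod (2*n+1))).ncard ≤ 1 := by
    simp
  have h4 := Set.ncard_union_le ((fun d : ℕ => v + (d : ZMod (2*n+1))) '' Set.Icc 1 m)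
    ((fun d : ℕ => v - (d : ZMod (2*n+1))) '' Set.Icc 1 m)
  omega

lemma lower_bound {m n t : ℕ} (hm : 1 ≤ m) (ht : 1 ≤ t) (hn : n = (2*m+1)*t)
    (S : Set (ZMod (2*n+1))) (hS : IsKTupleTotalDomSet (HararyOddOdd m n) 2 S) :
    2*(2*t)+1 ≤ S.ncard := by
  classical
  haveI : NeZero (2*n+1) := ⟨by omega⟩
  have hnpos : 1 ≤ n := by
    have := Nat.mul_le_mul_left (2*m+1) ht
    omega
  set G := HararyOddOdd m n with hG
  have hfin : S.Finite := Set.toFinite S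
  set F := hfin.toFinset with hFd
  have hcard : S.ncard = F.card := by rw [hFd, Set.ncard_eq_toFinset_card]
  have h1 : ∀ v : ZMod (2*n+1), 2 ≤ (F.filter (fun s => G.Adj v s)).card := by
    intro v
    refine le_trans (hS v) (le_of_eq ?_)
    rw [← Set.ncard_coe_finset]
    congr 1
    ext x
    simp only [Set.mem_inter_iff, SimpleGraph.mem_neighborSet, Finset.coe_filter,
      Set.mem_setOf_eq, hFd, Set.Finite.mem_toFinset]
    tauto
  have h2 : 2*(2*n+1) ≤ ∑ v : ZMod (2*n+1), (F.filter (fun s => G.Adj v s)).card := by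
    calc 2*(2*n+1) = ∑ _v : ZMod (2*n+1), 2 := by
          rw [Finset.sum_const, Finset.card_univ, ZMod.card, smul_eq_mul]
          ring
      _ ≤ _ := Finset.sum_le_sum fun v _ => h1 v
  have h3 : ∑ v : ZMod (2*n+1), (F.filter (fun s => G.Adj v s)).card
      = ∑ s ∈ F, (G.neighborSet s).ncard := by
    simp only [Finset.card_filter]
    rw [Finset.sum_comm]
    refine Finset.sum_congr rfl fun s _ => ?_
    rw [← Finset.card_filter, ← Set.ncard_coe_finset]
    congr 1
    ext w
    simp only [Finset.coe_filter, Finset.mem_univ, true_and, Set.mem_setOf_eq,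
      SimpleGraph.mem_neighborSet]
    rw [SimpleGraph.adj_comm]
  have h4 : ∑ s ∈ F, (G.neighborSet s).ncard ≤ (2*m+1) * F.card + 1 := by
    by_cases hmem : ((n:ℕ) : ZMod (2*n+1)) ∈ F
    · rw [← Finset.sum_erase_add F _ hmem]
      have ha : ∑ s ∈ F.erase ((n:ℕ) : ZMod (2*n+1)), (G.neighborSet s).ncard
          ≤ (2*m+1) * (F.card - 1) := by
        calc ∑ s ∈ F.erase ((n:ℕ) : ZMod (2*n+1)), (G.neighborSet s).ncard
            ≤ ∑ _s ∈ F.erase ((n:ℕ) : ZMod (2*n+1)), (2*m+1) :=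
              Finset.sum_le_sum fun s hs => deg_le hnpos s (Finset.ne_of_mem_erase hs)
          _ = (F.erase ((n:ℕ) : ZMod (2*n+1))).card * (2*m+1) := by
              rw [Finset.sum_const, smul_eq_mul]
          _ = (2*m+1) * (F.card - 1) := by
              rw [Finset.card_erase_of_mem hmem, Nat.mul_comm]
      have hb : (G.neighborSet ((n:ℕ) : ZMod (2*n+1))).ncard ≤ 2*m+2 := deg_le_all hnpos _
      have hc : 1 ≤ F.card := Finset.card_pos.2 ⟨_, hmem⟩
      have hd : (2*m+1) * (F.card - 1) + (2*m+1) = (2*m+1) * F.card := by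
        rw [← Nat.mul_succ]
        congr 1
        omega
      omega
    · calc ∑ s ∈ F, (G.neighborSet s).ncard ≤ ∑ _s ∈ F, (2*m+1) :=
            Finset.sum_le_sum fun s hs => deg_le hnpos s (fun h => hmem (h ▸ hs))
        _ = F.card * (2*m+1) := by rw [Finset.sum_const, smul_eq_mul]
        _ ≤ (2*m+1) * F.card + 1 := by rw [Nat.mul_comm]; omega
  rw [hcard]
  by_contra hcon
  push_neg at hcon
  have h5 : (2*m+1)*F.card ≤ (2*m+1)*(2*(2*t)) := Nat.mul_le_mul_left _ (by omega)
  have e : (2*m+1)*(2*(2*t)) = 4*((2*m+1)*t) := by ring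
  omega

end Stmt16Aux

theorem stmt_16 (m n ℓ r : ℕ) (hm : 1 ≤ m)
    (h1 : 2 * n + 1 = (2 * m + 1) * ℓ + r) (hr : r ≤ 2 * m) (hℓ : 1 ≤ ℓ) (hr1 : r = 1) :
    kTupleTotalDomNum (HararyOddOdd m n) 2 = ⌈(4 * n + 1 : ℚ) / (2 * m + 1 : ℚ)⌉₊ ∧
    ⌈(4 * n + 1 : ℚ) / (2 * m + 1 : ℚ)⌉₊ = 2 * ℓ + 1 := by
  subst hr1
  obtain ⟨t, ht⟩ : ∃ t, ℓ = 2*t := by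
    rcases Nat.even_or_odd ℓ with h | h
    · obtain ⟨k, hk⟩ := h
      exact ⟨k, by omega⟩
    · exfalso
      obtain ⟨k, hk⟩ := h
      subst hk
      have e : (2*m+1)*(2*k+1) = 2*(2*m*k+m+k)+1 := by ring
      omega
  subst ht
  have ht1 : 1 ≤ t := by omega
  have hn : n = (2*m+1)*t := by
    have e : (2*m+1)*(2*t) = 2*((2*m+1)*t) := by ring
    omega
  have h2n : 2*n = (2*m+1)*(2*t) := by
    have e : (2*m+1)*(2*t) = 2*((2*m+1)*t) := by ring
    omega
  have hceil : ⌈(4 * n + 1 : ℚ) / (2 * m + 1 : ℚ)⌉₊ = 2 * (2*t) + 1 := by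
    have hcast : (n:ℚ) = (2*(m:ℚ)+1)*(t:ℚ) := by
      rw [hn]; push_cast; ring
    rw [Nat.ceil_eq_iff (by omega)]
    constructor
    · have e1 : (2*(2*t)+1 : ℕ) - 1 = 4*t := by omega
      rw [e1, lt_div_iff₀ (by positivity)]
      push_cast
      nlinarith
    · rw [div_le_iff₀ (by positivity)]
      push_cast
      nlinarith
  refine ⟨?_, hceil⟩
  rw [hceil]
  have hdom := Stmt16Aux.hF_dom hm ht1 hn
  have hcardS : (↑(Stmt16Aux.hF m n (2*t)) : Set (ZMod (2*n+1))).ncard = 2*(2*t)+1 := by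
    rw [Set.ncard_coe_finset, Stmt16Aux.hF_card hm h2n]
  apply le_antisymm
  · exact Nat.sInf_le ⟨↑(Stmt16Aux.hF m n (2*t)), hdom, hcardS⟩
  · have hne : {r | ∃ S : Set (ZMod (2*n+1)),
        IsKTupleTotalDomSet (HararyOddOdd m n) 2 S ∧ S.ncard = r}.Nonempty :=
      ⟨2*(2*t)+1, ↑(Stmt16Aux.hF m n (2*t)), hdom, hcardS⟩
    obtain ⟨S, hS, hSc⟩ := Nat.sInf_mem hne
    rw [kTupleTotalDomNum, ← hSc]
    exact Stmt16Aux.lower_bound hm ht1 hn S hS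
end
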